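/- Let u : ℝ → ℝ be of class C^∞. For each h > 0 let ū_j = (1/h)∫_{Ω_j} u, and for k = 1, 2, 3, 4 let P_k^h be the unique polynomial of degree ≤ 3 whose cell averages over Ω_j equal ū_j for j in the substencil S_k = {k−4, …, k−1}. Then the global smoothness indicator of the seventh-order CWENOZ scheme (r = 4) satisfies τ(h) = |I[P_1^h] − I[P_2^h] − I[P_3^h] + I[P_4^h]| = O(h⁶) as h → 0⁺. -/

import Mathlib

/-- Cell average of `u` over the cell `Ω_j = [(j-1/2)h, (j+1/2)h]`. -/
noncomputable def cellAvg (h : ℝ) (j : ℤ) (u : ℝ → ℝ) : ℝ :=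
  (1 / h) * ∫ x in (((j : ℝ) - 1/2) * h)..(((j : ℝ) + 1/2) * h), u x

/-- Jiang–Shu smoothness indicator on `Ω_0 = [-h/2, h/2]` for a polynomial of degree ≤ q. -/
noncomputable def JS (q : ℕ) (h : ℝ) (P : Polynomial ℝ) : ℝ :=
  ∑ l ∈ Finset.Icc 1 q, h ^ (2 * l - 1) *
    ∫ x in (-h/2)..(h/2), (Polynomial.eval x ((⇑Polynomial.derivative)^[l] P)) ^ 2

/-- The symmetric matrix representing the Jiang–Shu indicator as a bilinear form:
for `1 ≤ i ≤ j`, `C i j = ∑_{m=1}^{i} 2^(2m-i-j)/((i-m)!(j-m)!(i+j-2m+1))` if `i+j` is even,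
and `0` if `i+j` is odd (extended symmetrically via `min i j`). -/
noncomputable def Cmat (i j : ℕ) : ℝ :=
  if (i + j) % 2 = 0 then
    ∑ m ∈ Finset.Icc 1 (min i j),
      (2 : ℝ) ^ (2 * (m : ℤ) - i - j) /
        ((Nat.factorial (i - m)) * (Nat.factorial (j - m)) * ((i + j - 2 * m + 1 : ℕ) : ℝ))
  else 0


open Polynomial


private lemma hm_pow (c : ℝ) (n : ℕ) (x : ℝ) :
    HasDerivAt (fun x : ℝ => c * x ^ (n + 1) / ((n : ℝ) + 1)) (c * x ^ n) x := by
  have h := ((hasDerivAt_pow (n + 1) x).const_mul c).div_const ((n : ℝ) + 1)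
  have hne : ((n : ℝ) + 1) ≠ 0 := by positivity
  refine h.congr_deriv ?_
  field_simp
  rw [Nat.add_sub_cancel]; push_cast; ring

lemma integ5 (a b c0 c1 c2 c3 c4 c5 : ℝ) :
    ∫ x in a..b, (c0 + c1*x + c2*x^2 + c3*x^3 + c4*x^4 + c5*x^5) =
      c0*(b-a) + c1*(b^2-a^2)/2 + c2*(b^3-a^3)/3 + c3*(b^4-a^4)/4
        + c4*(b^5-a^5)/5 + c5*(b^6-a^6)/6 := by
  have hD : ∀ x ∈ Set.uIcc a b, HasDerivAt
      (fun x : ℝ => c0*x^(0+1)/((0:ℕ)+1) + c1*x^(1+1)/((1:ℕ)+1) + c2*x^(2+1)/((2:ℕ)+1)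
        + c3*x^(3+1)/((3:ℕ)+1) + c4*x^(4+1)/((4:ℕ)+1) + c5*x^(5+1)/((5:ℕ)+1))
      (c0 + c1*x + c2*x^2 + c3*x^3 + c4*x^4 + c5*x^5) x := by
    intro x _
    have h1 := hm_pow c0 0 x
    have h2 := hm_pow c1 1 x
    have h3 := hm_pow c2 2 x
    have h4 := hm_pow c3 3 x
    have h5 := hm_pow c4 4 x
    have h6 := hm_pow c5 5 x
    have h := ((((h1.add h2).add h3).add h4).add h5).add h6
    refine h.congr_deriv ?_
    norm_num
  rw [intervalIntegral.integral_eq_sub_of_hasDerivAt hD ((Continuous.intervalIntegrable (by continuity) a b))]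
  norm_num
  ring

lemma eval_deg3 {P : Polynomial ℝ} (hd : P.natDegree ≤ 3) (x : ℝ) :
    P.eval x = P.coeff 0 + P.coeff 1 * x + P.coeff 2 * x^2 + P.coeff 3 * x^3 := by
  rw [Polynomial.eval_eq_sum_range' (lt_of_le_of_lt hd (by norm_num : (3:ℕ) < 4))]
  simp [Finset.sum_range_succ]

lemma eval_d1 {P : Polynomial ℝ} (hd : P.natDegree ≤ 3) (x : ℝ) :
    (derivative P).eval x = P.coeff 1 + 2*P.coeff 2*x + 3*P.coeff 3*x^2 := by
  have hd' : (derivative P).natDegree ≤ 2 := le_trans (natDegree_derivative_le P) (by omega)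
  rw [Polynomial.eval_eq_sum_range' (lt_of_le_of_lt hd' (by norm_num : (2:ℕ) < 3))]
  simp [Finset.sum_range_succ, Polynomial.coeff_derivative]
  ring

lemma eval_d2 {P : Polynomial ℝ} (hd : P.natDegree ≤ 3) (x : ℝ) :
    (derivative (derivative P)).eval x = 2*P.coeff 2 + 6*P.coeff 3*x := by
  have hd' : (derivative (derivative P)).natDegree ≤ 1 :=
    le_trans (natDegree_derivative_le _) (by
      have := le_trans (natDegree_derivative_le P) (Nat.sub_le_sub_right hd 1); omega)
  rw [Polynomial.eval_eq_sum_range' (lt_of_le_of_lt hd' (by norm_num : (1:ℕ) < 2))]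
  simp [Finset.sum_range_succ, Polynomial.coeff_derivative]
  ring

lemma eval_d3 {P : Polynomial ℝ} (hd : P.natDegree ≤ 3) (x : ℝ) :
    (derivative (derivative (derivative P))).eval x = 6*P.coeff 3 := by
  have h1 := le_trans (natDegree_derivative_le P) (Nat.sub_le_sub_right hd 1)
  have h2 := le_trans (natDegree_derivative_le (derivative P)) (Nat.sub_le_sub_right h1 1)
  have hd' : (derivative (derivative (derivative P))).natDegree ≤ 0 :=
    le_trans (natDegree_derivative_le _) (by omega)
  rw [Polynomial.eval_eq_sum_range' (lt_of_le_of_lt hd' (by norm_num : (0:ℕ) < 1))]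
  simp [Finset.sum_range_succ, Polynomial.coeff_derivative]
  ring

lemma JS_eq {P : Polynomial ℝ} (hd : P.natDegree ≤ 3) (h : ℝ) :
    JS 3 h P = (P.coeff 1 * h)^2 + 13/3*(P.coeff 2*h^2)^2
      + 1/2*((P.coeff 1*h)*(P.coeff 3*h^3)) + 3129/80*(P.coeff 3*h^3)^2 := by
  have hset : (Finset.Icc 1 3 : Finset ℕ) = {1, 2, 3} := by decide
  have i1 : (⇑derivative)^[1] P = derivative P := by
    rw [Function.iterate_one]
  have i2 : (⇑derivative)^[2] P = derivative (derivative P) := by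
    rw [Function.iterate_succ_apply', Function.iterate_one]
  have i3 : (⇑derivative)^[3] P = derivative (derivative (derivative P)) := by
    rw [Function.iterate_succ_apply', i2]
  set c1 := P.coeff 1
  set c2 := P.coeff 2
  set c3 := P.coeff 3
  have E1 : (∫ x in (-h/2)..(h/2), (Polynomial.eval x ((⇑derivative)^[1] P)) ^ 2)
      = c1^2*h + (4*c2^2+6*c1*c3)*((h/2)^3-(-h/2)^3)/3 + 9*c3^2*((h/2)^5-(-h/2)^5)/5 := by
    have hfun : (fun x : ℝ => (Polynomial.eval x ((⇑derivative)^[1] P)) ^ 2)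
        = fun x : ℝ => (c1^2) + (4*c1*c2)*x + (4*c2^2+6*c1*c3)*x^2 + (12*c2*c3)*x^3
            + (9*c3^2)*x^4 + 0*x^5 := by
      funext x; rw [i1, eval_d1 hd]; ring
    rw [hfun, integ5]; ring
  have E2 : (∫ x in (-h/2)..(h/2), (Polynomial.eval x ((⇑derivative)^[2] P)) ^ 2)
      = 4*c2^2*h + 36*c3^2*((h/2)^3-(-h/2)^3)/3 := by
    have hfun : (fun x : ℝ => (Polynomial.eval x ((⇑derivative)^[2] P)) ^ 2)
        = fun x : ℝ => (4*c2^2) + (24*c2*c3)*x + (36*c3^2)*x^2 + 0*x^3 + 0*x^4 + 0*x^5 := by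
      funext x; rw [i2, eval_d2 hd]; ring
    rw [hfun, integ5]; ring
  have E3 : (∫ x in (-h/2)..(h/2), (Polynomial.eval x ((⇑derivative)^[3] P)) ^ 2)
      = 36*c3^2*h := by
    have hfun : (fun x : ℝ => (Polynomial.eval x ((⇑derivative)^[3] P)) ^ 2)
        = fun x : ℝ => (36*c3^2) + 0*x + 0*x^2 + 0*x^3 + 0*x^4 + 0*x^5 := by
      funext x; rw [i3, eval_d3 hd]; ring
    rw [hfun, integ5]; ring
  rw [JS, hset]
  rw [Finset.sum_insert (by decide), Finset.sum_insert (by decide), Finset.sum_singleton]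
  rw [E1, E2, E3]
  norm_num
  ring

lemma cellAvg_poly5 (c0 c1 c2 c3 c4 c5 : ℝ) {h : ℝ} (hh : 0 < h) (j : ℤ) :
    cellAvg h j (fun x => c0 + c1*x + c2*x^2 + c3*x^3 + c4*x^4 + c5*x^5)
      = c0 + c1*(j:ℝ)*h + c2*((j:ℝ)^2+1/12)*h^2 + c3*((j:ℝ)^3+(j:ℝ)/4)*h^3
        + c4*((j:ℝ)^4+(j:ℝ)^2/2+1/80)*h^4 + c5*((j:ℝ)^5+(j:ℝ)^3*(5/6)+(j:ℝ)/16)*h^5 := by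
  rw [cellAvg, integ5]
  field_simp
  ring

lemma cellAvg_poly {P : Polynomial ℝ} (hd : P.natDegree ≤ 3) {h : ℝ} (hh : 0 < h) (j : ℤ) :
    cellAvg h j (fun x => P.eval x)
      = P.coeff 0 + P.coeff 1*(j:ℝ)*h + P.coeff 2*((j:ℝ)^2+1/12)*h^2
        + P.coeff 3*((j:ℝ)^3+(j:ℝ)/4)*h^3 := by
  have hfun : (fun x : ℝ => P.eval x) = fun x : ℝ =>
      P.coeff 0 + P.coeff 1*x + P.coeff 2*x^2 + P.coeff 3*x^3 + 0*x^4 + 0*x^5 := by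
    funext x; rw [eval_deg3 hd]; ring
  rw [hfun, cellAvg_poly5 _ _ _ _ _ _ hh]
  ring


lemma mvt_pow_step {f f' : ℝ → ℝ} (hf : ∀ x, HasDerivAt f (f' x) x) (h0 : f 0 = 0)
    {M : ℝ} (hM : 0 ≤ M) (m : ℕ) (hb : ∀ t : ℝ, |t| ≤ 1 → |f' t| ≤ M * |t|^m) :
    ∀ x : ℝ, |x| ≤ 1 → |f x| ≤ M * |x|^(m+1) := by
  intro x hx
  have habs : ∀ t ∈ Set.uIcc (0:ℝ) x, |t| ≤ |x| := by
    intro t ht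
    rcases Set.mem_uIcc.mp ht with ⟨h1, h2⟩ | ⟨h1, h2⟩ <;>
      (rw [abs_le]; constructor <;> nlinarith [le_abs_self x, neg_abs_le x])
  have key := (convex_uIcc (0:ℝ) x).norm_image_sub_le_of_norm_hasDerivWithin_le
      (f := f) (f' := f') (C := M * |x|^m)
      (fun t _ => (hf t).hasDerivWithinAt)
      (fun t ht => by
        have h1 := habs t ht
        calc ‖f' t‖ = |f' t| := rfl
          _ ≤ M * |t|^m := hb t (h1.trans hx)
          _ ≤ M * |x|^m := by gcongr)
      Set.left_mem_uIcc Set.right_mem_uIcc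
  have : |f x| ≤ M * |x|^m * |x| := by
    simpa [h0, Real.norm_eq_abs] using key
  calc |f x| ≤ M * |x|^m * |x| := this
    _ = M * |x|^(m+1) := by rw [pow_succ]; ring

lemma taylor_bound (u : ℝ → ℝ) (hu : ContDiff ℝ (⊤ : ℕ∞) u) :
    ∃ M : ℝ, 0 ≤ M ∧ ∀ x : ℝ, |x| ≤ 1 →
      |u x - (iteratedDeriv 0 u 0 + iteratedDeriv 1 u 0 * x + iteratedDeriv 2 u 0 / 2 * x^2
        + iteratedDeriv 3 u 0 / 6 * x^3 + iteratedDeriv 4 u 0 / 24 * x^4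
        + iteratedDeriv 5 u 0 / 120 * x^5)| ≤ M * |x|^6 := by
  have hdiff : ∀ (l : ℕ) (x : ℝ), HasDerivAt (iteratedDeriv l u) (iteratedDeriv (l+1) u x) x := by
    intro l x
    have h1 : DifferentiableAt ℝ (iteratedDeriv l u) x := by
      have := hu.differentiable_iteratedDeriv l (by exact_mod_cast lt_top_iff_ne_top.2 (by simp))
      exact this.differentiableAt
    rw [iteratedDeriv_succ]
    exact h1.hasDerivAt
  have hcont : Continuous (iteratedDeriv 6 u) := by
    exact hu.continuous_iteratedDeriv 6 (WithTop.coe_le_coe.mpr le_top)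
  obtain ⟨z, hz, hzmax⟩ := (isCompact_Icc (a := (-1:ℝ)) (b := 1)).exists_isMaxOn
    ⟨0, by norm_num⟩ (hcont.abs.continuousOn)
  set M := |iteratedDeriv 6 u z| with hMdef
  have hM : 0 ≤ M := abs_nonneg _
  refine ⟨M, hM, ?_⟩
  set u0 := iteratedDeriv 0 u 0
  set u1 := iteratedDeriv 1 u 0
  set u2 := iteratedDeriv 2 u 0
  set u3 := iteratedDeriv 3 u 0
  set u4 := iteratedDeriv 4 u 0
  set u5 := iteratedDeriv 5 u 0
  have hg5 : ∀ x : ℝ, |x| ≤ 1 → |iteratedDeriv 5 u x - u5| ≤ M * |x|^(0+1) := by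
    apply mvt_pow_step (f' := iteratedDeriv 6 u)
    · intro x; simpa using (hdiff 5 x).sub_const u5
    · simp [u5]
    · exact hM
    · intro t ht
      have hmem : t ∈ Set.Icc (-1:ℝ) 1 := by
        rcases abs_le.mp ht with ⟨h1, h2⟩; exact Set.mem_Icc.mpr ⟨h1, h2⟩
      simpa using hzmax hmem
  have hg4 : ∀ x : ℝ, |x| ≤ 1 → |iteratedDeriv 4 u x - (u4 + u5*x)| ≤ M * |x|^(1+1) := by
    apply mvt_pow_step (f' := fun x => iteratedDeriv 5 u x - u5)
    · intro x
      have hp : HasDerivAt (fun x : ℝ => u4 + u5*x) u5 x := by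
        exact ((hasDerivAt_const x u4).add ((hasDerivAt_id x).const_mul u5)).congr_deriv (by simp)
      exact (hdiff 4 x).sub hp
    · simp [u4]
    · exact hM
    · intro t ht; simpa using hg5 t ht
  have hg3 : ∀ x : ℝ, |x| ≤ 1 → |iteratedDeriv 3 u x - (u3 + u4*x + u5*x^2/2)| ≤ M * |x|^(2+1) := by
    apply mvt_pow_step (f' := fun x => iteratedDeriv 4 u x - (u4 + u5*x))
    · intro x
      have hp : HasDerivAt (fun x : ℝ => u3 + u4*x + u5*x^2/2) (u4 + u5*x) x := by
        have h1 := ((hasDerivAt_const x u3).add ((hasDerivAt_id x).const_mul u4)).add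
          (((hasDerivAt_pow 2 x).const_mul u5).div_const 2)
        refine h1.congr_deriv ?_
        push_cast; ring
      exact (hdiff 3 x).sub hp
    · simp [u3]
    · exact hM
    · intro t ht; simpa using hg4 t ht
  have hg2 : ∀ x : ℝ, |x| ≤ 1 →
      |iteratedDeriv 2 u x - (u2 + u3*x + u4*x^2/2 + u5*x^3/6)| ≤ M * |x|^(3+1) := by
    apply mvt_pow_step (f' := fun x => iteratedDeriv 3 u x - (u3 + u4*x + u5*x^2/2))
    · intro x
      have hp : HasDerivAt (fun x : ℝ => u2 + u3*x + u4*x^2/2 + u5*x^3/6)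
          (u3 + u4*x + u5*x^2/2) x := by
        have h1 := (((hasDerivAt_const x u2).add ((hasDerivAt_id x).const_mul u3)).add
          (((hasDerivAt_pow 2 x).const_mul u4).div_const 2)).add
          (((hasDerivAt_pow 3 x).const_mul u5).div_const 6)
        refine h1.congr_deriv ?_
        push_cast; ring
      exact (hdiff 2 x).sub hp
    · simp [u2]
    · exact hM
    · intro t ht; simpa using hg3 t ht
  have hg1 : ∀ x : ℝ, |x| ≤ 1 →
      |iteratedDeriv 1 u x - (u1 + u2*x + u3*x^2/2 + u4*x^3/6 + u5*x^4/24)| ≤ M * |x|^(4+1) := by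
    apply mvt_pow_step (f' := fun x => iteratedDeriv 2 u x - (u2 + u3*x + u4*x^2/2 + u5*x^3/6))
    · intro x
      have hp : HasDerivAt (fun x : ℝ => u1 + u2*x + u3*x^2/2 + u4*x^3/6 + u5*x^4/24)
          (u2 + u3*x + u4*x^2/2 + u5*x^3/6) x := by
        have h1 := ((((hasDerivAt_const x u1).add ((hasDerivAt_id x).const_mul u2)).add
          (((hasDerivAt_pow 2 x).const_mul u3).div_const 2)).add
          (((hasDerivAt_pow 3 x).const_mul u4).div_const 6)).add
          (((hasDerivAt_pow 4 x).const_mul u5).div_const 24)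
        refine h1.congr_deriv ?_
        push_cast; ring
      exact (hdiff 1 x).sub hp
    · simp [u1]
    · exact hM
    · intro t ht; simpa using hg2 t ht
  have hg0 : ∀ x : ℝ, |x| ≤ 1 →
      |u x - (u0 + u1*x + u2*x^2/2 + u3*x^3/6 + u4*x^4/24 + u5*x^5/120)| ≤ M * |x|^(5+1) := by
    apply mvt_pow_step
      (f' := fun x => iteratedDeriv 1 u x - (u1 + u2*x + u3*x^2/2 + u4*x^3/6 + u5*x^4/24))
    · intro x
      have hp : HasDerivAt (fun x : ℝ => u0 + u1*x + u2*x^2/2 + u3*x^3/6 + u4*x^4/24 + u5*x^5/120)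
          (u1 + u2*x + u3*x^2/2 + u4*x^3/6 + u5*x^4/24) x := by
        have h1 := (((((hasDerivAt_const x u0).add ((hasDerivAt_id x).const_mul u1)).add
          (((hasDerivAt_pow 2 x).const_mul u2).div_const 2)).add
          (((hasDerivAt_pow 3 x).const_mul u3).div_const 6)).add
          (((hasDerivAt_pow 4 x).const_mul u4).div_const 24)).add
          (((hasDerivAt_pow 5 x).const_mul u5).div_const 120)
        refine h1.congr_deriv ?_
        push_cast; ring
      have hu' : HasDerivAt u (iteratedDeriv 1 u x) x := by
        have := hdiff 0 x
        simpa [iteratedDeriv_zero] using this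
      exact hu'.sub hp
    · simp [u0, iteratedDeriv_zero]
    · exact hM
    · intro t ht; simpa using hg1 t ht
  intro x hx
  have h1 := hg0 x hx
  have heq : u x - (u0 + u1*x + u2/2*x^2 + u3/6*x^3 + u4/24*x^4 + u5/120*x^5)
      = u x - (u0 + u1*x + u2*x^2/2 + u3*x^3/6 + u4*x^4/24 + u5*x^5/120) := by ring
  rw [heq]
  simpa using h1


lemma abs_add4 (a b c d : ℝ) : |a + b + c + d| ≤ |a| + |b| + |c| + |d| := by
  calc |a + b + c + d| ≤ |a + b + c| + |d| := abs_add_le _ _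
    _ ≤ (|a + b| + |c|) + |d| := by gcongr; exact abs_add_le _ _
    _ ≤ ((|a| + |b|) + |c|) + |d| := by gcongr; exact abs_add_le _ _

lemma lin4_bound {w1 w2 w3 w4 r1 r2 r3 r4 R S : ℝ}
    (h1 : |r1| ≤ R) (h2 : |r2| ≤ R) (h3 : |r3| ≤ R) (h4 : |r4| ≤ R)
    (hw : |w1| + |w2| + |w3| + |w4| ≤ S) (hR : 0 ≤ R) :
    |w1*r1 + w2*r2 + w3*r3 + w4*r4| ≤ S * R := by
  calc |w1*r1 + w2*r2 + w3*r3 + w4*r4| ≤ |w1*r1| + |w2*r2| + |w3*r3| + |w4*r4| := abs_add4 _ _ _ _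
    _ = |w1| * |r1| + |w2| * |r2| + |w3| * |r3| + |w4| * |r4| := by rw [abs_mul, abs_mul, abs_mul, abs_mul]
    _ ≤ |w1| * R + |w2| * R + |w3| * R + |w4| * R := by gcongr <;> exact abs_nonneg _
    _ = (|w1| + |w2| + |w3| + |w4|) * R := by ring
    _ ≤ S * R := by gcongr

lemma Qdiff_bound {b1 b2 b3 r1 r2 r3 B R RM : ℝ}
    (hb1 : |b1| ≤ B) (hb2 : |b2| ≤ B) (hb3 : |b3| ≤ B)
    (hr1 : |r1| ≤ R) (hr2 : |r2| ≤ R) (hr3 : |r3| ≤ R)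
    (hR : 0 ≤ R) (hB : 0 ≤ B) (hRM : R ≤ RM) :
    |((b1+r1)^2 + 13/3*(b2+r2)^2 + 1/2*((b1+r1)*(b3+r3)) + 3129/80*(b3+r3)^2)
      - (b1^2 + 13/3*b2^2 + 1/2*(b1*b3) + 3129/80*b3^2)| ≤ 46*((2*B+RM)*R) := by
  have hRM0 : 0 ≤ RM := hR.trans hRM
  have hkey : ∀ b r : ℝ, |b| ≤ B → |r| ≤ R → |r*(2*b+r)| ≤ (2*B+RM)*R := by
    intro b r hb hr
    rw [abs_mul]
    have h2 : |2*b+r| ≤ 2*B+RM := by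
      calc |2*b+r| ≤ |2*b| + |r| := abs_add_le _ _
        _ = 2*|b| + |r| := by rw [abs_mul]; norm_num
        _ ≤ 2*B+RM := by linarith [hr.trans hRM]
    calc |r| * |2*b+r| ≤ R * (2*B+RM) := by
          apply mul_le_mul hr h2 (abs_nonneg _) hR
      _ = (2*B+RM)*R := by ring
  have t1 := hkey b1 r1 hb1 hr1
  have t2 := hkey b2 r2 hb2 hr2
  have t3 := hkey b3 r3 hb3 hr3
  have t4 : |b1*r3| ≤ (2*B+RM)*R := by
    rw [abs_mul]
    nlinarith [abs_nonneg b1, abs_nonneg r3, mul_le_mul hb1 hr3 (abs_nonneg r3) hB]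
  have t5 : |r1*b3| ≤ (2*B+RM)*R := by
    rw [abs_mul]
    nlinarith [abs_nonneg r1, abs_nonneg b3, mul_le_mul hr1 hb3 (abs_nonneg b3) hR]
  have t6 : |r1*r3| ≤ (2*B+RM)*R := by
    rw [abs_mul]
    nlinarith [abs_nonneg r1, abs_nonneg r3, mul_le_mul hr1 hr3 (abs_nonneg r3) hR,
      hr1.trans hRM]
  have e : ((b1+r1)^2 + 13/3*(b2+r2)^2 + 1/2*((b1+r1)*(b3+r3)) + 3129/80*(b3+r3)^2)
      - (b1^2 + 13/3*b2^2 + 1/2*(b1*b3) + 3129/80*b3^2)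
      = (r1*(2*b1+r1)) + 13/3*(r2*(2*b2+r2))
        + 1/2*(b1*r3 + r1*b3 + r1*r3) + 3129/80*(r3*(2*b3+r3)) := by ring
  rw [e]
  have hmid : |b1*r3 + r1*b3 + r1*r3| ≤ |b1*r3| + |r1*b3| + |r1*r3| := by
    calc |b1*r3 + r1*b3 + r1*r3| ≤ |b1*r3 + r1*b3| + |r1*r3| := abs_add_le _ _
      _ ≤ |b1*r3| + |r1*b3| + |r1*r3| := by gcongr; exact abs_add_le _ _
  have T2 : |13/3*(r2*(2*b2+r2))| = 13/3 * |r2*(2*b2+r2)| := by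
    rw [abs_mul]; norm_num
  have T3 : |1/2*(b1*r3 + r1*b3 + r1*r3)| = 1/2 * |b1*r3 + r1*b3 + r1*r3| := by
    rw [abs_mul]; norm_num
  have T4 : |3129/80*(r3*(2*b3+r3))| = 3129/80 * |r3*(2*b3+r3)| := by
    rw [abs_mul]; norm_num
  calc |(r1*(2*b1+r1)) + 13/3*(r2*(2*b2+r2))
      + 1/2*(b1*r3 + r1*b3 + r1*r3) + 3129/80*(r3*(2*b3+r3))|
      ≤ |r1*(2*b1+r1)| + |13/3*(r2*(2*b2+r2))| + |1/2*(b1*r3 + r1*b3 + r1*r3)|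
        + |3129/80*(r3*(2*b3+r3))| := abs_add4 _ _ _ _
    _ = |r1*(2*b1+r1)| + 13/3 * |r2*(2*b2+r2)| + 1/2 * |b1*r3 + r1*b3 + r1*r3|
        + 3129/80 * |r3*(2*b3+r3)| := by rw [T2, T3, T4]
    _ ≤ (2*B+RM)*R + 13/3*((2*B+RM)*R) + 1/2*((2*B+RM)*R + (2*B+RM)*R + (2*B+RM)*R)
        + 3129/80*((2*B+RM)*R) := by
        gcongr
        calc |b1*r3 + r1*b3 + r1*r3| ≤ |b1*r3| + |r1*b3| + |r1*r3| := hmid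
          _ ≤ (2*B+RM)*R + (2*B+RM)*R + (2*B+RM)*R := by gcongr
    _ ≤ 46*((2*B+RM)*R) := by nlinarith [mul_nonneg (by linarith : (0:ℝ) ≤ 2*B+RM) hR]


lemma abs_sub_le' (a b : ℝ) : |a - b| ≤ |a| + |b| := by
  simpa [sub_eq_add_neg, abs_neg] using abs_add_le a (-b)

lemma abs_add5' (a b c d e : ℝ) : |a + (b - c - d + e)| ≤ |a| + (|b| + |c| + |d| + |e|) := by
  have h1 : |b - c - d + e| ≤ |b| + |c| + |d| + |e| := by
    have := abs_add4 b (-c) (-d) e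
    simpa [sub_eq_add_neg, abs_neg] using this
  calc |a + (b - c - d + e)| ≤ |a| + |b - c - d + e| := abs_add_le _ _
    _ ≤ |a| + (|b| + |c| + |d| + |e|) := by linarith

set_option maxHeartbeats 4000000

/-- for the seventh-order CWENOZ scheme (r = 4), τ = |I₁ − I₂ − I₃ + I₄| = O(h⁶). -/
theorem cwenoz_tau_order_stmt14 (u : ℝ → ℝ) (hu : ContDiff ℝ (⊤ : ℕ∞) u)
    (P : ℕ → ℝ → Polynomial ℝ)
    (hP : ∀ k, 1 ≤ k → k ≤ 4 → ∀ h : ℝ, 0 < h →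
      (P k h).natDegree ≤ 3 ∧
      ∀ j ∈ Finset.Icc ((k : ℤ) - 4) ((k : ℤ) - 1),
        cellAvg h j (fun x => (P k h).eval x) = cellAvg h j u) :
    ∃ C > 0, ∃ h0 > 0, ∀ h : ℝ, 0 < h → h < h0 →
      |JS 3 h (P 1 h) - JS 3 h (P 2 h) - JS 3 h (P 3 h) + JS 3 h (P 4 h)| ≤ C * h ^ 6 := by

  obtain ⟨M, hM0, hTay⟩ := taylor_bound u hu
  obtain ⟨zU, hzUmem, hzUmax⟩ := (isCompact_Icc (a := (-1:ℝ)) (b := 1)).exists_isMaxOn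
    ⟨0, by norm_num⟩ ((hu.continuous.abs).continuousOn)
  set U := |u zU| with hUdef
  have hU0 : 0 ≤ U := abs_nonneg _
  set A0 := iteratedDeriv 0 u 0 with hA0d
  set A1 := iteratedDeriv 1 u 0 with hA1d
  set A2 := iteratedDeriv 2 u 0 / 2 with hA2d
  set A3 := iteratedDeriv 3 u 0 / 6 with hA3d
  set A4 := iteratedDeriv 4 u 0 / 24 with hA4d
  set A5 := iteratedDeriv 5 u 0 / 120 with hA5d
  set Bb := 7*U + 7*M with hBbd
  have hBb0 : 0 ≤ Bb := by rw [hBbd]; linarith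
  set CG := 160*|A1*A5| + 208*|A2*A4| + 17496/5*A4^2 + 3164*|A3*A5| + 249700/3*A5^2 with hCGd
  have hCG0 : 0 ≤ CG := by rw [hCGd]; positivity
  set K := 46*4*((2*Bb+7*M)*(7*(M*(7/2)^6))) with hKd
  have hK0 : 0 ≤ K := by
    rw [hKd]
    apply mul_nonneg (by norm_num)
    apply mul_nonneg (by linarith)
    exact mul_nonneg (by norm_num) (mul_nonneg hM0 (by positivity))
  refine ⟨CG + K + 1, by linarith, 1/4, by norm_num, ?_⟩
  intro h hh hh4
  have hR0 : (0:ℝ) ≤ M*(7/2)^6*h^6 := mul_nonneg (mul_nonneg hM0 (by positivity)) (by positivity)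
  have hsmall : M*(7/2)^6*h^6 ≤ M := by
    have h0 : (0:ℝ) ≤ 7/2*h := by positivity
    have h1 : (7/2:ℝ)*h ≤ 1 := by linarith
    have hp : ((7/2:ℝ)*h)^6 ≤ 1 := pow_le_one₀ h0 h1
    nlinarith [mul_le_mul_of_nonneg_left hp hM0]
  obtain ⟨hd1, he1⟩ := hP 1 le_rfl (by norm_num) h hh
  obtain ⟨hd2, he2⟩ := hP 2 (by norm_num) (by norm_num) h hh
  obtain ⟨hd3, he3⟩ := hP 3 (by norm_num) (by norm_num) h hh
  obtain ⟨hd4, he4⟩ := hP 4 (by norm_num) (by norm_num) h hh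
  have hsplit : ∀ j : ℤ, -3 ≤ j → j ≤ 3 → ∃ r : ℝ, cellAvg h j u
      = (A0 + A1*(j:ℝ)*h + A2*((j:ℝ)^2+1/12)*h^2 + A3*((j:ℝ)^3+(j:ℝ)/4)*h^3
        + A4*((j:ℝ)^4+(j:ℝ)^2/2+1/80)*h^4 + A5*((j:ℝ)^5+(j:ℝ)^3*(5/6)+(j:ℝ)/16)*h^5) + r
      ∧ |r| ≤ M*(7/2)^6*h^6 := by
    intro j hj1 hj2
    have hj1' : (-3:ℝ) ≤ (j:ℝ) := by exact_mod_cast hj1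
    have hj2' : (j:ℝ) ≤ 3 := by exact_mod_cast hj2
    refine ⟨cellAvg h j u
      - cellAvg h j (fun x : ℝ => A0 + A1*x + A2*x^2 + A3*x^3 + A4*x^4 + A5*x^5), ?_, ?_⟩
    · rw [cellAvg_poly5 A0 A1 A2 A3 A4 A5 hh j]; ring
    · have hint1 : IntervalIntegrable u MeasureTheory.volume
          (((j:ℝ)-1/2)*h) (((j:ℝ)+1/2)*h) := (hu.continuous).intervalIntegrable _ _
      have hint2 : IntervalIntegrable (fun x : ℝ => A0 + A1*x + A2*x^2 + A3*x^3 + A4*x^4 + A5*x^5)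
          MeasureTheory.volume (((j:ℝ)-1/2)*h) (((j:ℝ)+1/2)*h) :=
        Continuous.intervalIntegrable (by fun_prop) _ _
      have hIsub : cellAvg h j u
          - cellAvg h j (fun x : ℝ => A0 + A1*x + A2*x^2 + A3*x^3 + A4*x^4 + A5*x^5)
          = (1/h) * ∫ x in (((j:ℝ)-1/2)*h)..(((j:ℝ)+1/2)*h),
              (u x - (A0 + A1*x + A2*x^2 + A3*x^3 + A4*x^4 + A5*x^5)) := by
        simp only [cellAvg]
        rw [intervalIntegral.integral_sub hint1 hint2]
        ring
      rw [hIsub]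
      have hC : ∀ x ∈ Set.uIoc (((j:ℝ)-1/2)*h) (((j:ℝ)+1/2)*h),
          ‖u x - (A0 + A1*x + A2*x^2 + A3*x^3 + A4*x^4 + A5*x^5)‖ ≤ M*(7/2)^6*h^6 := by
        intro x hx
        rw [Set.uIoc_of_le (by nlinarith)] at hx
        obtain ⟨hx1, hx2⟩ := hx
        have hxb : |x| ≤ 7/2*h := by
          rw [abs_le]; constructor <;> nlinarith
        have hx1' : |x| ≤ 1 := by
          calc |x| ≤ 7/2*h := hxb
            _ ≤ 1 := by linarith
        calc ‖u x - (A0 + A1*x + A2*x^2 + A3*x^3 + A4*x^4 + A5*x^5)‖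
            = |u x - (A0 + A1*x + A2*x^2 + A3*x^3 + A4*x^4 + A5*x^5)| := rfl
          _ ≤ M * |x|^6 := hTay x hx1'
          _ ≤ M * (7/2*h)^6 := by
              apply mul_le_mul_of_nonneg_left _ hM0
              exact pow_le_pow_left₀ (abs_nonneg _) hxb 6
          _ = M*(7/2)^6*h^6 := by ring
      have hni := intervalIntegral.norm_integral_le_of_norm_le_const hC
      rw [Real.norm_eq_abs] at hni
      rw [abs_mul, abs_of_pos (by positivity : (0:ℝ) < 1/h)]
      calc 1/h * |∫ x in (((j:ℝ)-1/2)*h)..(((j:ℝ)+1/2)*h),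
              (u x - (A0 + A1*x + A2*x^2 + A3*x^3 + A4*x^4 + A5*x^5))|
          ≤ 1/h * (M*(7/2)^6*h^6 * |(((j:ℝ)+1/2)*h) - (((j:ℝ)-1/2)*h)|) := by
            apply mul_le_mul_of_nonneg_left hni (by positivity)
        _ = M*(7/2)^6*h^6 := by
            rw [show (((j:ℝ)+1/2)*h) - (((j:ℝ)-1/2)*h) = h from by ring, abs_of_pos hh]
            field_simp
  have hvb : ∀ j : ℤ, -3 ≤ j → j ≤ 3 → |cellAvg h j u| ≤ U := by
    intro j hj1 hj2
    have hj1' : (-3:ℝ) ≤ (j:ℝ) := by exact_mod_cast hj1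
    have hj2' : (j:ℝ) ≤ 3 := by exact_mod_cast hj2
    have hC : ∀ x ∈ Set.uIoc (((j:ℝ)-1/2)*h) (((j:ℝ)+1/2)*h), ‖u x‖ ≤ U := by
      intro x hx
      rw [Set.uIoc_of_le (by nlinarith)] at hx
      obtain ⟨hx1, hx2⟩ := hx
      have hxm : x ∈ Set.Icc (-1:ℝ) 1 := by
        constructor <;> nlinarith
      have := (isMaxOn_iff.mp hzUmax) x hxm
      calc ‖u x‖ = |u x| := rfl
        _ ≤ |u zU| := this
        _ = U := by rw [hUdef]
    have hni := intervalIntegral.norm_integral_le_of_norm_le_const hC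
    rw [Real.norm_eq_abs] at hni
    simp only [cellAvg]
    rw [abs_mul, abs_of_pos (by positivity : (0:ℝ) < 1/h)]
    calc 1/h * |∫ x in (((j:ℝ)-1/2)*h)..(((j:ℝ)+1/2)*h), u x|
        ≤ 1/h * (U * |(((j:ℝ)+1/2)*h) - (((j:ℝ)-1/2)*h)|) := by
          apply mul_le_mul_of_nonneg_left hni (by positivity)
      _ = U := by
          rw [show (((j:ℝ)+1/2)*h) - (((j:ℝ)-1/2)*h) = h from by ring, abs_of_pos hh]
          field_simp
  have E1m3 := he1 (-3) (by norm_num [Finset.mem_Icc])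
  rw [cellAvg_poly hd1 hh] at E1m3
  push_cast at E1m3
  have E1m2 := he1 (-2) (by norm_num [Finset.mem_Icc])
  rw [cellAvg_poly hd1 hh] at E1m2
  push_cast at E1m2
  have E1m1 := he1 (-1) (by norm_num [Finset.mem_Icc])
  rw [cellAvg_poly hd1 hh] at E1m1
  push_cast at E1m1
  have E1p0 := he1 (0) (by norm_num [Finset.mem_Icc])
  rw [cellAvg_poly hd1 hh] at E1p0
  push_cast at E1p0
  have E2m2 := he2 (-2) (by norm_num [Finset.mem_Icc])
  rw [cellAvg_poly hd2 hh] at E2m2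
  push_cast at E2m2
  have E2m1 := he2 (-1) (by norm_num [Finset.mem_Icc])
  rw [cellAvg_poly hd2 hh] at E2m1
  push_cast at E2m1
  have E2p0 := he2 (0) (by norm_num [Finset.mem_Icc])
  rw [cellAvg_poly hd2 hh] at E2p0
  push_cast at E2p0
  have E2p1 := he2 (1) (by norm_num [Finset.mem_Icc])
  rw [cellAvg_poly hd2 hh] at E2p1
  push_cast at E2p1
  have E3m1 := he3 (-1) (by norm_num [Finset.mem_Icc])
  rw [cellAvg_poly hd3 hh] at E3m1
  push_cast at E3m1
  have E3p0 := he3 (0) (by norm_num [Finset.mem_Icc])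
  rw [cellAvg_poly hd3 hh] at E3p0
  push_cast at E3p0
  have E3p1 := he3 (1) (by norm_num [Finset.mem_Icc])
  rw [cellAvg_poly hd3 hh] at E3p1
  push_cast at E3p1
  have E3p2 := he3 (2) (by norm_num [Finset.mem_Icc])
  rw [cellAvg_poly hd3 hh] at E3p2
  push_cast at E3p2
  have E4p0 := he4 (0) (by norm_num [Finset.mem_Icc])
  rw [cellAvg_poly hd4 hh] at E4p0
  push_cast at E4p0
  have E4p1 := he4 (1) (by norm_num [Finset.mem_Icc])
  rw [cellAvg_poly hd4 hh] at E4p1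
  push_cast at E4p1
  have E4p2 := he4 (2) (by norm_num [Finset.mem_Icc])
  rw [cellAvg_poly hd4 hh] at E4p2
  push_cast at E4p2
  have E4p3 := he4 (3) (by norm_num [Finset.mem_Icc])
  rw [cellAvg_poly hd4 hh] at E4p3
  push_cast at E4p3
  have B11 : (P 1 h).coeff 1 * h = (-7/24)*cellAvg h (-3) u + (11/8)*cellAvg h (-2) u + (-23/8)*cellAvg h (-1) u + (43/24)*cellAvg h 0 u := by
    linear_combination ((-7/24) : ℝ)*E1m3 + ((11/8) : ℝ)*E1m2 + ((-23/8) : ℝ)*E1m1 + ((43/24) : ℝ)*E1p0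
  have B12 : (P 1 h).coeff 2 * h^2 = (-1/2)*cellAvg h (-3) u + (2)*cellAvg h (-2) u + (-5/2)*cellAvg h (-1) u + (1)*cellAvg h 0 u := by
    linear_combination ((-1/2) : ℝ)*E1m3 + ((2) : ℝ)*E1m2 + ((-5/2) : ℝ)*E1m1 + ((1) : ℝ)*E1p0
  have B13 : (P 1 h).coeff 3 * h^3 = (-1/6)*cellAvg h (-3) u + (1/2)*cellAvg h (-2) u + (-1/2)*cellAvg h (-1) u + (1/6)*cellAvg h 0 u := by
    linear_combination ((-1/6) : ℝ)*E1m3 + ((1/2) : ℝ)*E1m2 + ((-1/2) : ℝ)*E1m1 + ((1/6) : ℝ)*E1p0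
  have B21 : (P 2 h).coeff 1 * h = (5/24)*cellAvg h (-2) u + (-9/8)*cellAvg h (-1) u + (5/8)*cellAvg h 0 u + (7/24)*cellAvg h 1 u := by
    linear_combination ((5/24) : ℝ)*E2m2 + ((-9/8) : ℝ)*E2m1 + ((5/8) : ℝ)*E2p0 + ((7/24) : ℝ)*E2p1
  have B22 : (P 2 h).coeff 2 * h^2 = (0)*cellAvg h (-2) u + (1/2)*cellAvg h (-1) u + (-1)*cellAvg h 0 u + (1/2)*cellAvg h 1 u := by
    linear_combination ((0) : ℝ)*E2m2 + ((1/2) : ℝ)*E2m1 + ((-1) : ℝ)*E2p0 + ((1/2) : ℝ)*E2p1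
  have B23 : (P 2 h).coeff 3 * h^3 = (-1/6)*cellAvg h (-2) u + (1/2)*cellAvg h (-1) u + (-1/2)*cellAvg h 0 u + (1/6)*cellAvg h 1 u := by
    linear_combination ((-1/6) : ℝ)*E2m2 + ((1/2) : ℝ)*E2m1 + ((-1/2) : ℝ)*E2p0 + ((1/6) : ℝ)*E2p1
  have B31 : (P 3 h).coeff 1 * h = (-7/24)*cellAvg h (-1) u + (-5/8)*cellAvg h 0 u + (9/8)*cellAvg h 1 u + (-5/24)*cellAvg h 2 u := by
    linear_combination ((-7/24) : ℝ)*E3m1 + ((-5/8) : ℝ)*E3p0 + ((9/8) : ℝ)*E3p1 + ((-5/24) : ℝ)*E3p2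
  have B32 : (P 3 h).coeff 2 * h^2 = (1/2)*cellAvg h (-1) u + (-1)*cellAvg h 0 u + (1/2)*cellAvg h 1 u + (0)*cellAvg h 2 u := by
    linear_combination ((1/2) : ℝ)*E3m1 + ((-1) : ℝ)*E3p0 + ((1/2) : ℝ)*E3p1 + ((0) : ℝ)*E3p2
  have B33 : (P 3 h).coeff 3 * h^3 = (-1/6)*cellAvg h (-1) u + (1/2)*cellAvg h 0 u + (-1/2)*cellAvg h 1 u + (1/6)*cellAvg h 2 u := by
    linear_combination ((-1/6) : ℝ)*E3m1 + ((1/2) : ℝ)*E3p0 + ((-1/2) : ℝ)*E3p1 + ((1/6) : ℝ)*E3p2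
  have B41 : (P 4 h).coeff 1 * h = (-43/24)*cellAvg h 0 u + (23/8)*cellAvg h 1 u + (-11/8)*cellAvg h 2 u + (7/24)*cellAvg h 3 u := by
    linear_combination ((-43/24) : ℝ)*E4p0 + ((23/8) : ℝ)*E4p1 + ((-11/8) : ℝ)*E4p2 + ((7/24) : ℝ)*E4p3
  have B42 : (P 4 h).coeff 2 * h^2 = (1)*cellAvg h 0 u + (-5/2)*cellAvg h 1 u + (2)*cellAvg h 2 u + (-1/2)*cellAvg h 3 u := by
    linear_combination ((1) : ℝ)*E4p0 + ((-5/2) : ℝ)*E4p1 + ((2) : ℝ)*E4p2 + ((-1/2) : ℝ)*E4p3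
  have B43 : (P 4 h).coeff 3 * h^3 = (-1/6)*cellAvg h 0 u + (1/2)*cellAvg h 1 u + (-1/2)*cellAvg h 2 u + (1/6)*cellAvg h 3 u := by
    linear_combination ((-1/6) : ℝ)*E4p0 + ((1/2) : ℝ)*E4p1 + ((-1/2) : ℝ)*E4p2 + ((1/6) : ℝ)*E4p3
  rw [JS_eq hd1 h, JS_eq hd2 h, JS_eq hd3 h, JS_eq hd4 h]
  rw [B11, B12, B13, B21, B22, B23, B31, B32, B33, B41, B42, B43]
  obtain ⟨rm3, htm3, hrm3⟩ := hsplit (-3) (by norm_num) (by norm_num)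
  push_cast at htm3
  obtain ⟨rm2, htm2, hrm2⟩ := hsplit (-2) (by norm_num) (by norm_num)
  push_cast at htm2
  obtain ⟨rm1, htm1, hrm1⟩ := hsplit (-1) (by norm_num) (by norm_num)
  push_cast at htm1
  obtain ⟨rp0, htp0, hrp0⟩ := hsplit (0) (by norm_num) (by norm_num)
  push_cast at htp0
  obtain ⟨rp1, htp1, hrp1⟩ := hsplit (1) (by norm_num) (by norm_num)
  push_cast at htp1
  obtain ⟨rp2, htp2, hrp2⟩ := hsplit (2) (by norm_num) (by norm_num)
  push_cast at htp2
  obtain ⟨rp3, htp3, hrp3⟩ := hsplit (3) (by norm_num) (by norm_num)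
  push_cast at htp3
  have hvm3 := hvb (-3) (by norm_num) (by norm_num)
  have hvm2 := hvb (-2) (by norm_num) (by norm_num)
  have hvm1 := hvb (-1) (by norm_num) (by norm_num)
  have hvp0 := hvb (0) (by norm_num) (by norm_num)
  have hvp1 := hvb (1) (by norm_num) (by norm_num)
  have hvp2 := hvb (2) (by norm_num) (by norm_num)
  have hvp3 := hvb (3) (by norm_num) (by norm_num)
  have hrho11 : |((-7/24)*cellAvg h (-3) u + (11/8)*cellAvg h (-2) u + (-23/8)*cellAvg h (-1) u + (43/24)*cellAvg h 0 u) - ((1)*A1*h^1 + (-9/2)*A4*h^4 + (1421/48)*A5*h^5)| ≤ 7*(M*(7/2)^6*h^6) := by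
    have hlin : ((-7/24)*cellAvg h (-3) u + (11/8)*cellAvg h (-2) u + (-23/8)*cellAvg h (-1) u + (43/24)*cellAvg h 0 u) - ((1)*A1*h^1 + (-9/2)*A4*h^4 + (1421/48)*A5*h^5) = (-7/24)*rm3 + (11/8)*rm2 + (-23/8)*rm1 + (43/24)*rp0 := by
      linear_combination ((-7/24) : ℝ)*htm3 + ((11/8) : ℝ)*htm2 + ((-23/8) : ℝ)*htm1 + ((43/24) : ℝ)*htp0
    rw [hlin]
    exact lin4_bound hrm3 hrm2 hrm1 hrp0 (by norm_num [abs_of_nonneg]) hR0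
  have hBabs11 : |(-7/24)*cellAvg h (-3) u + (11/8)*cellAvg h (-2) u + (-23/8)*cellAvg h (-1) u + (43/24)*cellAvg h 0 u| ≤ 7*U := by
    exact lin4_bound hvm3 hvm2 hvm1 hvp0 (by norm_num [abs_of_nonneg]) hU0
  have hbeta11 : |(1)*A1*h^1 + (-9/2)*A4*h^4 + (1421/48)*A5*h^5| ≤ Bb := by
    have e : ((1)*A1*h^1 + (-9/2)*A4*h^4 + (1421/48)*A5*h^5) = ((-7/24)*cellAvg h (-3) u + (11/8)*cellAvg h (-2) u + (-23/8)*cellAvg h (-1) u + (43/24)*cellAvg h 0 u) - (((-7/24)*cellAvg h (-3) u + (11/8)*cellAvg h (-2) u + (-23/8)*cellAvg h (-1) u + (43/24)*cellAvg h 0 u) - ((1)*A1*h^1 + (-9/2)*A4*h^4 + (1421/48)*A5*h^5)) := by ring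
    rw [e]
    calc |((-7/24)*cellAvg h (-3) u + (11/8)*cellAvg h (-2) u + (-23/8)*cellAvg h (-1) u + (43/24)*cellAvg h 0 u) - (((-7/24)*cellAvg h (-3) u + (11/8)*cellAvg h (-2) u + (-23/8)*cellAvg h (-1) u + (43/24)*cellAvg h 0 u) - ((1)*A1*h^1 + (-9/2)*A4*h^4 + (1421/48)*A5*h^5))| ≤ |(-7/24)*cellAvg h (-3) u + (11/8)*cellAvg h (-2) u + (-23/8)*cellAvg h (-1) u + (43/24)*cellAvg h 0 u| + |((-7/24)*cellAvg h (-3) u + (11/8)*cellAvg h (-2) u + (-23/8)*cellAvg h (-1) u + (43/24)*cellAvg h 0 u) - ((1)*A1*h^1 + (-9/2)*A4*h^4 + (1421/48)*A5*h^5)| := abs_sub_le' _ _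
      _ ≤ 7*U + 7*(M*(7/2)^6*h^6) := add_le_add hBabs11 hrho11
      _ ≤ Bb := by rw [hBbd]; linarith only [hsmall]
  have hrho12 : |((-1/2)*cellAvg h (-3) u + (2)*cellAvg h (-2) u + (-5/2)*cellAvg h (-1) u + (1)*cellAvg h 0 u) - ((1)*A2*h^2 + (-21/2)*A4*h^4 + (60)*A5*h^5)| ≤ 7*(M*(7/2)^6*h^6) := by
    have hlin : ((-1/2)*cellAvg h (-3) u + (2)*cellAvg h (-2) u + (-5/2)*cellAvg h (-1) u + (1)*cellAvg h 0 u) - ((1)*A2*h^2 + (-21/2)*A4*h^4 + (60)*A5*h^5) = (-1/2)*rm3 + (2)*rm2 + (-5/2)*rm1 + (1)*rp0 := by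
      linear_combination ((-1/2) : ℝ)*htm3 + ((2) : ℝ)*htm2 + ((-5/2) : ℝ)*htm1 + ((1) : ℝ)*htp0
    rw [hlin]
    exact lin4_bound hrm3 hrm2 hrm1 hrp0 (by norm_num [abs_of_nonneg]) hR0
  have hBabs12 : |(-1/2)*cellAvg h (-3) u + (2)*cellAvg h (-2) u + (-5/2)*cellAvg h (-1) u + (1)*cellAvg h 0 u| ≤ 7*U := by
    exact lin4_bound hvm3 hvm2 hvm1 hvp0 (by norm_num [abs_of_nonneg]) hU0
  have hbeta12 : |(1)*A2*h^2 + (-21/2)*A4*h^4 + (60)*A5*h^5| ≤ Bb := by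
    have e : ((1)*A2*h^2 + (-21/2)*A4*h^4 + (60)*A5*h^5) = ((-1/2)*cellAvg h (-3) u + (2)*cellAvg h (-2) u + (-5/2)*cellAvg h (-1) u + (1)*cellAvg h 0 u) - (((-1/2)*cellAvg h (-3) u + (2)*cellAvg h (-2) u + (-5/2)*cellAvg h (-1) u + (1)*cellAvg h 0 u) - ((1)*A2*h^2 + (-21/2)*A4*h^4 + (60)*A5*h^5)) := by ring
    rw [e]
    calc |((-1/2)*cellAvg h (-3) u + (2)*cellAvg h (-2) u + (-5/2)*cellAvg h (-1) u + (1)*cellAvg h 0 u) - (((-1/2)*cellAvg h (-3) u + (2)*cellAvg h (-2) u + (-5/2)*cellAvg h (-1) u + (1)*cellAvg h 0 u) - ((1)*A2*h^2 + (-21/2)*A4*h^4 + (60)*A5*h^5))| ≤ |(-1/2)*cellAvg h (-3) u + (2)*cellAvg h (-2) u + (-5/2)*cellAvg h (-1) u + (1)*cellAvg h 0 u| + |((-1/2)*cellAvg h (-3) u + (2)*cellAvg h (-2) u + (-5/2)*cellAvg h (-1) u + (1)*cellAvg h 0 u) - ((1)*A2*h^2 + (-21/2)*A4*h^4 + (60)*A5*h^5)|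 := abs_sub_le' _ _
      _ ≤ 7*U + 7*(M*(7/2)^6*h^6) := add_le_add hBabs12 hrho12
      _ ≤ Bb := by rw [hBbd]; linarith only [hsmall]
  have hrho13 : |((-1/6)*cellAvg h (-3) u + (1/2)*cellAvg h (-2) u + (-1/2)*cellAvg h (-1) u + (1/6)*cellAvg h 0 u) - ((1)*A3*h^3 + (-6)*A4*h^4 + (155/6)*A5*h^5)| ≤ 7*(M*(7/2)^6*h^6) := by
    have hlin : ((-1/6)*cellAvg h (-3) u + (1/2)*cellAvg h (-2) u + (-1/2)*cellAvg h (-1) u + (1/6)*cellAvg h 0 u) - ((1)*A3*h^3 + (-6)*A4*h^4 + (155/6)*A5*h^5) = (-1/6)*rm3 + (1/2)*rm2 + (-1/2)*rm1 + (1/6)*rp0 := by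
      linear_combination ((-1/6) : ℝ)*htm3 + ((1/2) : ℝ)*htm2 + ((-1/2) : ℝ)*htm1 + ((1/6) : ℝ)*htp0
    rw [hlin]
    exact lin4_bound hrm3 hrm2 hrm1 hrp0 (by norm_num [abs_of_nonneg]) hR0
  have hBabs13 : |(-1/6)*cellAvg h (-3) u + (1/2)*cellAvg h (-2) u + (-1/2)*cellAvg h (-1) u + (1/6)*cellAvg h 0 u| ≤ 7*U := by
    exact lin4_bound hvm3 hvm2 hvm1 hvp0 (by norm_num [abs_of_nonneg]) hU0
  have hbeta13 : |(1)*A3*h^3 + (-6)*A4*h^4 + (155/6)*A5*h^5| ≤ Bb := by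
    have e : ((1)*A3*h^3 + (-6)*A4*h^4 + (155/6)*A5*h^5) = ((-1/6)*cellAvg h (-3) u + (1/2)*cellAvg h (-2) u + (-1/2)*cellAvg h (-1) u + (1/6)*cellAvg h 0 u) - (((-1/6)*cellAvg h (-3) u + (1/2)*cellAvg h (-2) u + (-1/2)*cellAvg h (-1) u + (1/6)*cellAvg h 0 u) - ((1)*A3*h^3 + (-6)*A4*h^4 + (155/6)*A5*h^5)) := by ring
    rw [e]
    calc |((-1/6)*cellAvg h (-3) u + (1/2)*cellAvg h (-2) u + (-1/2)*cellAvg h (-1) u + (1/6)*cellAvg h 0 u) - (((-1/6)*cellAvg h (-3) u + (1/2)*cellAvg h (-2) u + (-1/2)*cellAvg h (-1) u + (1/6)*cellAvg h 0 u) - ((1)*A3*h^3 + (-6)*A4*h^4 + (155/6)*A5*h^5))| ≤ |(-1/6)*cellAvg h (-3) u + (1/2)*cellAvg h (-2) u + (-1/2)*cellAvg h (-1) u + (1/6)*cellAvg h 0 u| + |((-1/6)*cellAvg h (-3) u + (1/2)*cellAvg h (-2) u + (-1/2)*cellAvg h (-1) u + (1/6)*cellAvg h 0 u) - ((1)*A3*h^3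 + (-6)*A4*h^4 + (155/6)*A5*h^5)| := abs_sub_le' _ _
      _ ≤ 7*U + 7*(M*(7/2)^6*h^6) := add_le_add hBabs13 hrho13
      _ ≤ Bb := by rw [hBbd]; linarith only [hsmall]
  have hrho21 : |((5/24)*cellAvg h (-2) u + (-9/8)*cellAvg h (-1) u + (5/8)*cellAvg h 0 u + (7/24)*cellAvg h 1 u) - ((1)*A1*h^1 + (5/2)*A4*h^4 + (-259/48)*A5*h^5)| ≤ 7*(M*(7/2)^6*h^6) := by
    have hlin : ((5/24)*cellAvg h (-2) u + (-9/8)*cellAvg h (-1) u + (5/8)*cellAvg h 0 u + (7/24)*cellAvg h 1 u) - ((1)*A1*h^1 + (5/2)*A4*h^4 + (-259/48)*A5*h^5) = (5/24)*rm2 + (-9/8)*rm1 + (5/8)*rp0 + (7/24)*rp1 := by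
      linear_combination ((5/24) : ℝ)*htm2 + ((-9/8) : ℝ)*htm1 + ((5/8) : ℝ)*htp0 + ((7/24) : ℝ)*htp1
    rw [hlin]
    exact lin4_bound hrm2 hrm1 hrp0 hrp1 (by norm_num [abs_of_nonneg]) hR0
  have hBabs21 : |(5/24)*cellAvg h (-2) u + (-9/8)*cellAvg h (-1) u + (5/8)*cellAvg h 0 u + (7/24)*cellAvg h 1 u| ≤ 7*U := by
    exact lin4_bound hvm2 hvm1 hvp0 hvp1 (by norm_num [abs_of_nonneg]) hU0
  have hbeta21 : |(1)*A1*h^1 + (5/2)*A4*h^4 + (-259/48)*A5*h^5| ≤ Bb := by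
    have e : ((1)*A1*h^1 + (5/2)*A4*h^4 + (-259/48)*A5*h^5) = ((5/24)*cellAvg h (-2) u + (-9/8)*cellAvg h (-1) u + (5/8)*cellAvg h 0 u + (7/24)*cellAvg h 1 u) - (((5/24)*cellAvg h (-2) u + (-9/8)*cellAvg h (-1) u + (5/8)*cellAvg h 0 u + (7/24)*cellAvg h 1 u) - ((1)*A1*h^1 + (5/2)*A4*h^4 + (-259/48)*A5*h^5)) := by ring
    rw [e]
    calc |((5/24)*cellAvg h (-2) u + (-9/8)*cellAvg h (-1) u + (5/8)*cellAvg h 0 u + (7/24)*cellAvg h 1 u) - (((5/24)*cellAvg h (-2) u + (-9/8)*cellAvg h (-1) u + (5/8)*cellAvg h 0 u + (7/24)*cellAvg h 1 u) - ((1)*A1*h^1 + (5/2)*A4*h^4 + (-259/48)*A5*h^5))| ≤ |(5/24)*cellAvg h (-2) u + (-9/8)*cellAvg h (-1) u + (5/8)*cellAvg h 0 u + (7/24)*cellAvg h 1 u| + |((5/24)*cellAvg h (-2) u + (-9/8)*cellAvg h (-1) u + (5/8)*cellAvg h 0 u + (7/24)*cellAvg h 1 u) - ((1)*A1*h^1 +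 (5/2)*A4*h^4 + (-259/48)*A5*h^5)| := abs_sub_le' _ _
      _ ≤ 7*U + 7*(M*(7/2)^6*h^6) := add_le_add hBabs21 hrho21
      _ ≤ Bb := by rw [hBbd]; linarith only [hsmall]
  have hrho22 : |((0)*cellAvg h (-2) u + (1/2)*cellAvg h (-1) u + (-1)*cellAvg h 0 u + (1/2)*cellAvg h 1 u) - ((1)*A2*h^2 + (3/2)*A4*h^4)| ≤ 7*(M*(7/2)^6*h^6) := by
    have hlin : ((0)*cellAvg h (-2) u + (1/2)*cellAvg h (-1) u + (-1)*cellAvg h 0 u + (1/2)*cellAvg h 1 u) - ((1)*A2*h^2 + (3/2)*A4*h^4) = (0)*rm2 + (1/2)*rm1 + (-1)*rp0 + (1/2)*rp1 := by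
      linear_combination ((0) : ℝ)*htm2 + ((1/2) : ℝ)*htm1 + ((-1) : ℝ)*htp0 + ((1/2) : ℝ)*htp1
    rw [hlin]
    exact lin4_bound hrm2 hrm1 hrp0 hrp1 (by norm_num [abs_of_nonneg]) hR0
  have hBabs22 : |(0)*cellAvg h (-2) u + (1/2)*cellAvg h (-1) u + (-1)*cellAvg h 0 u + (1/2)*cellAvg h 1 u| ≤ 7*U := by
    exact lin4_bound hvm2 hvm1 hvp0 hvp1 (by norm_num [abs_of_nonneg]) hU0
  have hbeta22 : |(1)*A2*h^2 + (3/2)*A4*h^4| ≤ Bb := by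
    have e : ((1)*A2*h^2 + (3/2)*A4*h^4) = ((0)*cellAvg h (-2) u + (1/2)*cellAvg h (-1) u + (-1)*cellAvg h 0 u + (1/2)*cellAvg h 1 u) - (((0)*cellAvg h (-2) u + (1/2)*cellAvg h (-1) u + (-1)*cellAvg h 0 u + (1/2)*cellAvg h 1 u) - ((1)*A2*h^2 + (3/2)*A4*h^4)) := by ring
    rw [e]
    calc |((0)*cellAvg h (-2) u + (1/2)*cellAvg h (-1) u + (-1)*cellAvg h 0 u + (1/2)*cellAvg h 1 u) - (((0)*cellAvg h (-2) u + (1/2)*cellAvg h (-1) u + (-1)*cellAvg h 0 u + (1/2)*cellAvg h 1 u) - ((1)*A2*h^2 + (3/2)*A4*h^4))| ≤ |(0)*cellAvg h (-2) u + (1/2)*cellAvg h (-1) u + (-1)*cellAvg h 0 u + (1/2)*cellAvg h 1 u| + |((0)*cellAvg h (-2) u + (1/2)*cellAvg h (-1) u + (-1)*cellAvg h 0 u + (1/2)*cellAvg h 1 u) - ((1)*A2*h^2 + (3/2)*A4*h^4)| := abs_sub_le' _ _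
      _ ≤ 7*U + 7*(M*(7/2)^6*h^6) := add_le_add hBabs22 hrho22
      _ ≤ Bb := by rw [hBbd]; linarith only [hsmall]
  have hrho23 : |((-1/6)*cellAvg h (-2) u + (1/2)*cellAvg h (-1) u + (-1/2)*cellAvg h 0 u + (1/6)*cellAvg h 1 u) - ((1)*A3*h^3 + (-2)*A4*h^4 + (35/6)*A5*h^5)| ≤ 7*(M*(7/2)^6*h^6) := by
    have hlin : ((-1/6)*cellAvg h (-2) u + (1/2)*cellAvg h (-1) u + (-1/2)*cellAvg h 0 u + (1/6)*cellAvg h 1 u) - ((1)*A3*h^3 + (-2)*A4*h^4 + (35/6)*A5*h^5) = (-1/6)*rm2 + (1/2)*rm1 + (-1/2)*rp0 + (1/6)*rp1 := by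
      linear_combination ((-1/6) : ℝ)*htm2 + ((1/2) : ℝ)*htm1 + ((-1/2) : ℝ)*htp0 + ((1/6) : ℝ)*htp1
    rw [hlin]
    exact lin4_bound hrm2 hrm1 hrp0 hrp1 (by norm_num [abs_of_nonneg]) hR0
  have hBabs23 : |(-1/6)*cellAvg h (-2) u + (1/2)*cellAvg h (-1) u + (-1/2)*cellAvg h 0 u + (1/6)*cellAvg h 1 u| ≤ 7*U := by
    exact lin4_bound hvm2 hvm1 hvp0 hvp1 (by norm_num [abs_of_nonneg]) hU0
  have hbeta23 : |(1)*A3*h^3 + (-2)*A4*h^4 + (35/6)*A5*h^5| ≤ Bb := by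
    have e : ((1)*A3*h^3 + (-2)*A4*h^4 + (35/6)*A5*h^5) = ((-1/6)*cellAvg h (-2) u + (1/2)*cellAvg h (-1) u + (-1/2)*cellAvg h 0 u + (1/6)*cellAvg h 1 u) - (((-1/6)*cellAvg h (-2) u + (1/2)*cellAvg h (-1) u + (-1/2)*cellAvg h 0 u + (1/6)*cellAvg h 1 u) - ((1)*A3*h^3 + (-2)*A4*h^4 + (35/6)*A5*h^5)) := by ring
    rw [e]
    calc |((-1/6)*cellAvg h (-2) u + (1/2)*cellAvg h (-1) u + (-1/2)*cellAvg h 0 u + (1/6)*cellAvg h 1 u) - (((-1/6)*cellAvg h (-2) u + (1/2)*cellAvg h (-1) u + (-1/2)*cellAvg h 0 u + (1/6)*cellAvg h 1 u) - ((1)*A3*h^3 + (-2)*A4*h^4 + (35/6)*A5*h^5))| ≤ |(-1/6)*cellAvg h (-2) u + (1/2)*cellAvg h (-1) u + (-1/2)*cellAvg h 0 u + (1/6)*cellAvg h 1 u| + |((-1/6)*cellAvg h (-2) u + (1/2)*cellAvg h (-1) u + (-1/2)*cellAvg h 0 u + (1/6)*cellAvg h 1 u) - ((1)*A3*h^3 +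 (-2)*A4*h^4 + (35/6)*A5*h^5)| := abs_sub_le' _ _
      _ ≤ 7*U + 7*(M*(7/2)^6*h^6) := add_le_add hBabs23 hrho23
      _ ≤ Bb := by rw [hBbd]; linarith only [hsmall]
  have hrho31 : |((-7/24)*cellAvg h (-1) u + (-5/8)*cellAvg h 0 u + (9/8)*cellAvg h 1 u + (-5/24)*cellAvg h 2 u) - ((1)*A1*h^1 + (-5/2)*A4*h^4 + (-259/48)*A5*h^5)| ≤ 7*(M*(7/2)^6*h^6) := by
    have hlin : ((-7/24)*cellAvg h (-1) u + (-5/8)*cellAvg h 0 u + (9/8)*cellAvg h 1 u + (-5/24)*cellAvg h 2 u) - ((1)*A1*h^1 + (-5/2)*A4*h^4 + (-259/48)*A5*h^5) = (-7/24)*rm1 + (-5/8)*rp0 + (9/8)*rp1 + (-5/24)*rp2 := by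
      linear_combination ((-7/24) : ℝ)*htm1 + ((-5/8) : ℝ)*htp0 + ((9/8) : ℝ)*htp1 + ((-5/24) : ℝ)*htp2
    rw [hlin]
    exact lin4_bound hrm1 hrp0 hrp1 hrp2 (by norm_num [abs_of_nonneg]) hR0
  have hBabs31 : |(-7/24)*cellAvg h (-1) u + (-5/8)*cellAvg h 0 u + (9/8)*cellAvg h 1 u + (-5/24)*cellAvg h 2 u| ≤ 7*U := by
    exact lin4_bound hvm1 hvp0 hvp1 hvp2 (by norm_num [abs_of_nonneg]) hU0
  have hbeta31 : |(1)*A1*h^1 + (-5/2)*A4*h^4 + (-259/48)*A5*h^5| ≤ Bb := by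
    have e : ((1)*A1*h^1 + (-5/2)*A4*h^4 + (-259/48)*A5*h^5) = ((-7/24)*cellAvg h (-1) u + (-5/8)*cellAvg h 0 u + (9/8)*cellAvg h 1 u + (-5/24)*cellAvg h 2 u) - (((-7/24)*cellAvg h (-1) u + (-5/8)*cellAvg h 0 u + (9/8)*cellAvg h 1 u + (-5/24)*cellAvg h 2 u) - ((1)*A1*h^1 + (-5/2)*A4*h^4 + (-259/48)*A5*h^5)) := by ring
    rw [e]
    calc |((-7/24)*cellAvg h (-1) u + (-5/8)*cellAvg h 0 u + (9/8)*cellAvg h 1 u + (-5/24)*cellAvg h 2 u) - (((-7/24)*cellAvg h (-1) u + (-5/8)*cellAvg h 0 u + (9/8)*cellAvg h 1 u + (-5/24)*cellAvg h 2 u) - ((1)*A1*h^1 + (-5/2)*A4*h^4 + (-259/48)*A5*h^5))| ≤ |(-7/24)*cellAvg h (-1) u + (-5/8)*cellAvg h 0 u + (9/8)*cellAvg h 1 u + (-5/24)*cellAvg h 2 u| + |((-7/24)*cellAvg h (-1) u + (-5/8)*cellAvg h 0 u + (9/8)*cellAvg h 1 u + (-5/24)*cellAvg h 2 u) - ((1)*A1*h^1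 + (-5/2)*A4*h^4 + (-259/48)*A5*h^5)| := abs_sub_le' _ _
      _ ≤ 7*U + 7*(M*(7/2)^6*h^6) := add_le_add hBabs31 hrho31
      _ ≤ Bb := by rw [hBbd]; linarith only [hsmall]
  have hrho32 : |((1/2)*cellAvg h (-1) u + (-1)*cellAvg h 0 u + (1/2)*cellAvg h 1 u + (0)*cellAvg h 2 u) - ((1)*A2*h^2 + (3/2)*A4*h^4)| ≤ 7*(M*(7/2)^6*h^6) := by
    have hlin : ((1/2)*cellAvg h (-1) u + (-1)*cellAvg h 0 u + (1/2)*cellAvg h 1 u + (0)*cellAvg h 2 u) - ((1)*A2*h^2 + (3/2)*A4*h^4) = (1/2)*rm1 + (-1)*rp0 + (1/2)*rp1 + (0)*rp2 := by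
      linear_combination ((1/2) : ℝ)*htm1 + ((-1) : ℝ)*htp0 + ((1/2) : ℝ)*htp1 + ((0) : ℝ)*htp2
    rw [hlin]
    exact lin4_bound hrm1 hrp0 hrp1 hrp2 (by norm_num [abs_of_nonneg]) hR0
  have hBabs32 : |(1/2)*cellAvg h (-1) u + (-1)*cellAvg h 0 u + (1/2)*cellAvg h 1 u + (0)*cellAvg h 2 u| ≤ 7*U := by
    exact lin4_bound hvm1 hvp0 hvp1 hvp2 (by norm_num [abs_of_nonneg]) hU0
  have hbeta32 : |(1)*A2*h^2 + (3/2)*A4*h^4| ≤ Bb := by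
    have e : ((1)*A2*h^2 + (3/2)*A4*h^4) = ((1/2)*cellAvg h (-1) u + (-1)*cellAvg h 0 u + (1/2)*cellAvg h 1 u + (0)*cellAvg h 2 u) - (((1/2)*cellAvg h (-1) u + (-1)*cellAvg h 0 u + (1/2)*cellAvg h 1 u + (0)*cellAvg h 2 u) - ((1)*A2*h^2 + (3/2)*A4*h^4)) := by ring
    rw [e]
    calc |((1/2)*cellAvg h (-1) u + (-1)*cellAvg h 0 u + (1/2)*cellAvg h 1 u + (0)*cellAvg h 2 u) - (((1/2)*cellAvg h (-1) u + (-1)*cellAvg h 0 u + (1/2)*cellAvg h 1 u + (0)*cellAvg h 2 u) - ((1)*A2*h^2 + (3/2)*A4*h^4))| ≤ |(1/2)*cellAvg h (-1) u + (-1)*cellAvg h 0 u + (1/2)*cellAvg h 1 u + (0)*cellAvg h 2 u| + |((1/2)*cellAvg h (-1) u + (-1)*cellAvg h 0 u + (1/2)*cellAvg h 1 u + (0)*cellAvg h 2 u) - ((1)*A2*h^2 + (3/2)*A4*h^4)| := abs_sub_le' _ _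
      _ ≤ 7*U + 7*(M*(7/2)^6*h^6) := add_le_add hBabs32 hrho32
      _ ≤ Bb := by rw [hBbd]; linarith only [hsmall]
  have hrho33 : |((-1/6)*cellAvg h (-1) u + (1/2)*cellAvg h 0 u + (-1/2)*cellAvg h 1 u + (1/6)*cellAvg h 2 u) - ((1)*A3*h^3 + (2)*A4*h^4 + (35/6)*A5*h^5)| ≤ 7*(M*(7/2)^6*h^6) := by
    have hlin : ((-1/6)*cellAvg h (-1) u + (1/2)*cellAvg h 0 u + (-1/2)*cellAvg h 1 u + (1/6)*cellAvg h 2 u) - ((1)*A3*h^3 + (2)*A4*h^4 + (35/6)*A5*h^5) = (-1/6)*rm1 + (1/2)*rp0 + (-1/2)*rp1 + (1/6)*rp2 := by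
      linear_combination ((-1/6) : ℝ)*htm1 + ((1/2) : ℝ)*htp0 + ((-1/2) : ℝ)*htp1 + ((1/6) : ℝ)*htp2
    rw [hlin]
    exact lin4_bound hrm1 hrp0 hrp1 hrp2 (by norm_num [abs_of_nonneg]) hR0
  have hBabs33 : |(-1/6)*cellAvg h (-1) u + (1/2)*cellAvg h 0 u + (-1/2)*cellAvg h 1 u + (1/6)*cellAvg h 2 u| ≤ 7*U := by
    exact lin4_bound hvm1 hvp0 hvp1 hvp2 (by norm_num [abs_of_nonneg]) hU0
  have hbeta33 : |(1)*A3*h^3 + (2)*A4*h^4 + (35/6)*A5*h^5| ≤ Bb := by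
    have e : ((1)*A3*h^3 + (2)*A4*h^4 + (35/6)*A5*h^5) = ((-1/6)*cellAvg h (-1) u + (1/2)*cellAvg h 0 u + (-1/2)*cellAvg h 1 u + (1/6)*cellAvg h 2 u) - (((-1/6)*cellAvg h (-1) u + (1/2)*cellAvg h 0 u + (-1/2)*cellAvg h 1 u + (1/6)*cellAvg h 2 u) - ((1)*A3*h^3 + (2)*A4*h^4 + (35/6)*A5*h^5)) := by ring
    rw [e]
    calc |((-1/6)*cellAvg h (-1) u + (1/2)*cellAvg h 0 u + (-1/2)*cellAvg h 1 u + (1/6)*cellAvg h 2 u) - (((-1/6)*cellAvg h (-1) u + (1/2)*cellAvg h 0 u + (-1/2)*cellAvg h 1 u + (1/6)*cellAvg h 2 u) - ((1)*A3*h^3 + (2)*A4*h^4 + (35/6)*A5*h^5))| ≤ |(-1/6)*cellAvg h (-1) u + (1/2)*cellAvg h 0 u + (-1/2)*cellAvg h 1 u + (1/6)*cellAvg h 2 u| + |((-1/6)*cellAvg h (-1) u + (1/2)*cellAvg h 0 u + (-1/2)*cellAvg h 1 u + (1/6)*cellAvg h 2 u) - ((1)*A3*h^3 + (2)*A4*h^4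 + (35/6)*A5*h^5)| := abs_sub_le' _ _
      _ ≤ 7*U + 7*(M*(7/2)^6*h^6) := add_le_add hBabs33 hrho33
      _ ≤ Bb := by rw [hBbd]; linarith only [hsmall]
  have hrho41 : |((-43/24)*cellAvg h 0 u + (23/8)*cellAvg h 1 u + (-11/8)*cellAvg h 2 u + (7/24)*cellAvg h 3 u) - ((1)*A1*h^1 + (9/2)*A4*h^4 + (1421/48)*A5*h^5)| ≤ 7*(M*(7/2)^6*h^6) := by
    have hlin : ((-43/24)*cellAvg h 0 u + (23/8)*cellAvg h 1 u + (-11/8)*cellAvg h 2 u + (7/24)*cellAvg h 3 u) - ((1)*A1*h^1 + (9/2)*A4*h^4 + (1421/48)*A5*h^5) = (-43/24)*rp0 + (23/8)*rp1 + (-11/8)*rp2 + (7/24)*rp3 := by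
      linear_combination ((-43/24) : ℝ)*htp0 + ((23/8) : ℝ)*htp1 + ((-11/8) : ℝ)*htp2 + ((7/24) : ℝ)*htp3
    rw [hlin]
    exact lin4_bound hrp0 hrp1 hrp2 hrp3 (by norm_num [abs_of_nonneg]) hR0
  have hBabs41 : |(-43/24)*cellAvg h 0 u + (23/8)*cellAvg h 1 u + (-11/8)*cellAvg h 2 u + (7/24)*cellAvg h 3 u| ≤ 7*U := by
    exact lin4_bound hvp0 hvp1 hvp2 hvp3 (by norm_num [abs_of_nonneg]) hU0
  have hbeta41 : |(1)*A1*h^1 + (9/2)*A4*h^4 + (1421/48)*A5*h^5| ≤ Bb := by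
    have e : ((1)*A1*h^1 + (9/2)*A4*h^4 + (1421/48)*A5*h^5) = ((-43/24)*cellAvg h 0 u + (23/8)*cellAvg h 1 u + (-11/8)*cellAvg h 2 u + (7/24)*cellAvg h 3 u) - (((-43/24)*cellAvg h 0 u + (23/8)*cellAvg h 1 u + (-11/8)*cellAvg h 2 u + (7/24)*cellAvg h 3 u) - ((1)*A1*h^1 + (9/2)*A4*h^4 + (1421/48)*A5*h^5)) := by ring
    rw [e]
    calc |((-43/24)*cellAvg h 0 u + (23/8)*cellAvg h 1 u + (-11/8)*cellAvg h 2 u + (7/24)*cellAvg h 3 u) - (((-43/24)*cellAvg h 0 u + (23/8)*cellAvg h 1 u + (-11/8)*cellAvg h 2 u + (7/24)*cellAvg h 3 u) - ((1)*A1*h^1 + (9/2)*A4*h^4 + (1421/48)*A5*h^5))| ≤ |(-43/24)*cellAvg h 0 u + (23/8)*cellAvg h 1 u + (-11/8)*cellAvg h 2 u + (7/24)*cellAvg h 3 u| + |((-43/24)*cellAvg h 0 u + (23/8)*cellAvg h 1 u + (-11/8)*cellAvg h 2 u + (7/24)*cellAvg h 3 u) - ((1)*A1*h^1 + (9/2)*A4*h^4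 + (1421/48)*A5*h^5)| := abs_sub_le' _ _
      _ ≤ 7*U + 7*(M*(7/2)^6*h^6) := add_le_add hBabs41 hrho41
      _ ≤ Bb := by rw [hBbd]; linarith only [hsmall]
  have hrho42 : |((1)*cellAvg h 0 u + (-5/2)*cellAvg h 1 u + (2)*cellAvg h 2 u + (-1/2)*cellAvg h 3 u) - ((1)*A2*h^2 + (-21/2)*A4*h^4 + (-60)*A5*h^5)| ≤ 7*(M*(7/2)^6*h^6) := by
    have hlin : ((1)*cellAvg h 0 u + (-5/2)*cellAvg h 1 u + (2)*cellAvg h 2 u + (-1/2)*cellAvg h 3 u) - ((1)*A2*h^2 + (-21/2)*A4*h^4 + (-60)*A5*h^5) = (1)*rp0 + (-5/2)*rp1 + (2)*rp2 + (-1/2)*rp3 := by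
      linear_combination ((1) : ℝ)*htp0 + ((-5/2) : ℝ)*htp1 + ((2) : ℝ)*htp2 + ((-1/2) : ℝ)*htp3
    rw [hlin]
    exact lin4_bound hrp0 hrp1 hrp2 hrp3 (by norm_num [abs_of_nonneg]) hR0
  have hBabs42 : |(1)*cellAvg h 0 u + (-5/2)*cellAvg h 1 u + (2)*cellAvg h 2 u + (-1/2)*cellAvg h 3 u| ≤ 7*U := by
    exact lin4_bound hvp0 hvp1 hvp2 hvp3 (by norm_num [abs_of_nonneg]) hU0
  have hbeta42 : |(1)*A2*h^2 + (-21/2)*A4*h^4 + (-60)*A5*h^5| ≤ Bb := by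
    have e : ((1)*A2*h^2 + (-21/2)*A4*h^4 + (-60)*A5*h^5) = ((1)*cellAvg h 0 u + (-5/2)*cellAvg h 1 u + (2)*cellAvg h 2 u + (-1/2)*cellAvg h 3 u) - (((1)*cellAvg h 0 u + (-5/2)*cellAvg h 1 u + (2)*cellAvg h 2 u + (-1/2)*cellAvg h 3 u) - ((1)*A2*h^2 + (-21/2)*A4*h^4 + (-60)*A5*h^5)) := by ring
    rw [e]
    calc |((1)*cellAvg h 0 u + (-5/2)*cellAvg h 1 u + (2)*cellAvg h 2 u + (-1/2)*cellAvg h 3 u) - (((1)*cellAvg h 0 u + (-5/2)*cellAvg h 1 u + (2)*cellAvg h 2 u + (-1/2)*cellAvg h 3 u) - ((1)*A2*h^2 + (-21/2)*A4*h^4 + (-60)*A5*h^5))| ≤ |(1)*cellAvg h 0 u + (-5/2)*cellAvg h 1 u + (2)*cellAvg h 2 u + (-1/2)*cellAvg h 3 u| + |((1)*cellAvg h 0 u + (-5/2)*cellAvg h 1 u + (2)*cellAvg h 2 u + (-1/2)*cellAvg h 3 u) - ((1)*A2*h^2 + (-21/2)*A4*h^4 + (-60)*A5*h^5)| := abs_sub_le'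 _ _
      _ ≤ 7*U + 7*(M*(7/2)^6*h^6) := add_le_add hBabs42 hrho42
      _ ≤ Bb := by rw [hBbd]; linarith only [hsmall]
  have hrho43 : |((-1/6)*cellAvg h 0 u + (1/2)*cellAvg h 1 u + (-1/2)*cellAvg h 2 u + (1/6)*cellAvg h 3 u) - ((1)*A3*h^3 + (6)*A4*h^4 + (155/6)*A5*h^5)| ≤ 7*(M*(7/2)^6*h^6) := by
    have hlin : ((-1/6)*cellAvg h 0 u + (1/2)*cellAvg h 1 u + (-1/2)*cellAvg h 2 u + (1/6)*cellAvg h 3 u) - ((1)*A3*h^3 + (6)*A4*h^4 + (155/6)*A5*h^5) = (-1/6)*rp0 + (1/2)*rp1 + (-1/2)*rp2 + (1/6)*rp3 := by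
      linear_combination ((-1/6) : ℝ)*htp0 + ((1/2) : ℝ)*htp1 + ((-1/2) : ℝ)*htp2 + ((1/6) : ℝ)*htp3
    rw [hlin]
    exact lin4_bound hrp0 hrp1 hrp2 hrp3 (by norm_num [abs_of_nonneg]) hR0
  have hBabs43 : |(-1/6)*cellAvg h 0 u + (1/2)*cellAvg h 1 u + (-1/2)*cellAvg h 2 u + (1/6)*cellAvg h 3 u| ≤ 7*U := by
    exact lin4_bound hvp0 hvp1 hvp2 hvp3 (by norm_num [abs_of_nonneg]) hU0
  have hbeta43 : |(1)*A3*h^3 + (6)*A4*h^4 + (155/6)*A5*h^5| ≤ Bb := by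
    have e : ((1)*A3*h^3 + (6)*A4*h^4 + (155/6)*A5*h^5) = ((-1/6)*cellAvg h 0 u + (1/2)*cellAvg h 1 u + (-1/2)*cellAvg h 2 u + (1/6)*cellAvg h 3 u) - (((-1/6)*cellAvg h 0 u + (1/2)*cellAvg h 1 u + (-1/2)*cellAvg h 2 u + (1/6)*cellAvg h 3 u) - ((1)*A3*h^3 + (6)*A4*h^4 + (155/6)*A5*h^5)) := by ring
    rw [e]
    calc |((-1/6)*cellAvg h 0 u + (1/2)*cellAvg h 1 u + (-1/2)*cellAvg h 2 u + (1/6)*cellAvg h 3 u) - (((-1/6)*cellAvg h 0 u + (1/2)*cellAvg h 1 u + (-1/2)*cellAvg h 2 u + (1/6)*cellAvg h 3 u) - ((1)*A3*h^3 + (6)*A4*h^4 + (155/6)*A5*h^5))| ≤ |(-1/6)*cellAvg h 0 u + (1/2)*cellAvg h 1 u + (-1/2)*cellAvg h 2 u + (1/6)*cellAvg h 3 u| + |((-1/6)*cellAvg h 0 u + (1/2)*cellAvg h 1 u + (-1/2)*cellAvg h 2 u + (1/6)*cellAvg h 3 u) - ((1)*A3*h^3 + (6)*A4*h^4 + (155/6)*A5*h^5)|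 := abs_sub_le' _ _
      _ ≤ 7*U + 7*(M*(7/2)^6*h^6) := add_le_add hBabs43 hrho43
      _ ≤ Bb := by rw [hBbd]; linarith only [hsmall]
  set ρ11 := ((-7/24)*cellAvg h (-3) u + (11/8)*cellAvg h (-2) u + (-23/8)*cellAvg h (-1) u + (43/24)*cellAvg h 0 u) - ((1)*A1*h^1 + (-9/2)*A4*h^4 + (1421/48)*A5*h^5) with hrd11
  have hsp11 : (-7/24)*cellAvg h (-3) u + (11/8)*cellAvg h (-2) u + (-23/8)*cellAvg h (-1) u + (43/24)*cellAvg h 0 u = ((1)*A1*h^1 + (-9/2)*A4*h^4 + (1421/48)*A5*h^5) + ρ11 := by rw [hrd11]; ring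
  set ρ12 := ((-1/2)*cellAvg h (-3) u + (2)*cellAvg h (-2) u + (-5/2)*cellAvg h (-1) u + (1)*cellAvg h 0 u) - ((1)*A2*h^2 + (-21/2)*A4*h^4 + (60)*A5*h^5) with hrd12
  have hsp12 : (-1/2)*cellAvg h (-3) u + (2)*cellAvg h (-2) u + (-5/2)*cellAvg h (-1) u + (1)*cellAvg h 0 u = ((1)*A2*h^2 + (-21/2)*A4*h^4 + (60)*A5*h^5) + ρ12 := by rw [hrd12]; ring
  set ρ13 := ((-1/6)*cellAvg h (-3) u + (1/2)*cellAvg h (-2) u + (-1/2)*cellAvg h (-1) u + (1/6)*cellAvg h 0 u) - ((1)*A3*h^3 + (-6)*A4*h^4 + (155/6)*A5*h^5) with hrd13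
  have hsp13 : (-1/6)*cellAvg h (-3) u + (1/2)*cellAvg h (-2) u + (-1/2)*cellAvg h (-1) u + (1/6)*cellAvg h 0 u = ((1)*A3*h^3 + (-6)*A4*h^4 + (155/6)*A5*h^5) + ρ13 := by rw [hrd13]; ring
  set ρ21 := ((5/24)*cellAvg h (-2) u + (-9/8)*cellAvg h (-1) u + (5/8)*cellAvg h 0 u + (7/24)*cellAvg h 1 u) - ((1)*A1*h^1 + (5/2)*A4*h^4 + (-259/48)*A5*h^5) with hrd21
  have hsp21 : (5/24)*cellAvg h (-2) u + (-9/8)*cellAvg h (-1) u + (5/8)*cellAvg h 0 u + (7/24)*cellAvg h 1 u = ((1)*A1*h^1 + (5/2)*A4*h^4 + (-259/48)*A5*h^5) + ρ21 := by rw [hrd21]; ring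
  set ρ22 := ((0)*cellAvg h (-2) u + (1/2)*cellAvg h (-1) u + (-1)*cellAvg h 0 u + (1/2)*cellAvg h 1 u) - ((1)*A2*h^2 + (3/2)*A4*h^4) with hrd22
  have hsp22 : (0)*cellAvg h (-2) u + (1/2)*cellAvg h (-1) u + (-1)*cellAvg h 0 u + (1/2)*cellAvg h 1 u = ((1)*A2*h^2 + (3/2)*A4*h^4) + ρ22 := by rw [hrd22]; ring
  set ρ23 := ((-1/6)*cellAvg h (-2) u + (1/2)*cellAvg h (-1) u + (-1/2)*cellAvg h 0 u + (1/6)*cellAvg h 1 u) - ((1)*A3*h^3 + (-2)*A4*h^4 + (35/6)*A5*h^5) with hrd23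
  have hsp23 : (-1/6)*cellAvg h (-2) u + (1/2)*cellAvg h (-1) u + (-1/2)*cellAvg h 0 u + (1/6)*cellAvg h 1 u = ((1)*A3*h^3 + (-2)*A4*h^4 + (35/6)*A5*h^5) + ρ23 := by rw [hrd23]; ring
  set ρ31 := ((-7/24)*cellAvg h (-1) u + (-5/8)*cellAvg h 0 u + (9/8)*cellAvg h 1 u + (-5/24)*cellAvg h 2 u) - ((1)*A1*h^1 + (-5/2)*A4*h^4 + (-259/48)*A5*h^5) with hrd31
  have hsp31 : (-7/24)*cellAvg h (-1) u + (-5/8)*cellAvg h 0 u + (9/8)*cellAvg h 1 u + (-5/24)*cellAvg h 2 u = ((1)*A1*h^1 + (-5/2)*A4*h^4 + (-259/48)*A5*h^5) + ρ31 := by rw [hrd31]; ring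
  set ρ32 := ((1/2)*cellAvg h (-1) u + (-1)*cellAvg h 0 u + (1/2)*cellAvg h 1 u + (0)*cellAvg h 2 u) - ((1)*A2*h^2 + (3/2)*A4*h^4) with hrd32
  have hsp32 : (1/2)*cellAvg h (-1) u + (-1)*cellAvg h 0 u + (1/2)*cellAvg h 1 u + (0)*cellAvg h 2 u = ((1)*A2*h^2 + (3/2)*A4*h^4) + ρ32 := by rw [hrd32]; ring
  set ρ33 := ((-1/6)*cellAvg h (-1) u + (1/2)*cellAvg h 0 u + (-1/2)*cellAvg h 1 u + (1/6)*cellAvg h 2 u) - ((1)*A3*h^3 + (2)*A4*h^4 + (35/6)*A5*h^5) with hrd33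
  have hsp33 : (-1/6)*cellAvg h (-1) u + (1/2)*cellAvg h 0 u + (-1/2)*cellAvg h 1 u + (1/6)*cellAvg h 2 u = ((1)*A3*h^3 + (2)*A4*h^4 + (35/6)*A5*h^5) + ρ33 := by rw [hrd33]; ring
  set ρ41 := ((-43/24)*cellAvg h 0 u + (23/8)*cellAvg h 1 u + (-11/8)*cellAvg h 2 u + (7/24)*cellAvg h 3 u) - ((1)*A1*h^1 + (9/2)*A4*h^4 + (1421/48)*A5*h^5) with hrd41
  have hsp41 : (-43/24)*cellAvg h 0 u + (23/8)*cellAvg h 1 u + (-11/8)*cellAvg h 2 u + (7/24)*cellAvg h 3 u = ((1)*A1*h^1 + (9/2)*A4*h^4 + (1421/48)*A5*h^5) + ρ41 := by rw [hrd41]; ring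
  set ρ42 := ((1)*cellAvg h 0 u + (-5/2)*cellAvg h 1 u + (2)*cellAvg h 2 u + (-1/2)*cellAvg h 3 u) - ((1)*A2*h^2 + (-21/2)*A4*h^4 + (-60)*A5*h^5) with hrd42
  have hsp42 : (1)*cellAvg h 0 u + (-5/2)*cellAvg h 1 u + (2)*cellAvg h 2 u + (-1/2)*cellAvg h 3 u = ((1)*A2*h^2 + (-21/2)*A4*h^4 + (-60)*A5*h^5) + ρ42 := by rw [hrd42]; ring
  set ρ43 := ((-1/6)*cellAvg h 0 u + (1/2)*cellAvg h 1 u + (-1/2)*cellAvg h 2 u + (1/6)*cellAvg h 3 u) - ((1)*A3*h^3 + (6)*A4*h^4 + (155/6)*A5*h^5) with hrd43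
  have hsp43 : (-1/6)*cellAvg h 0 u + (1/2)*cellAvg h 1 u + (-1/2)*cellAvg h 2 u + (1/6)*cellAvg h 3 u = ((1)*A3*h^3 + (6)*A4*h^4 + (155/6)*A5*h^5) + ρ43 := by rw [hrd43]; ring
  rw [hsp11, hsp12, hsp13, hsp21, hsp22, hsp23, hsp31, hsp32, hsp33, hsp41, hsp42, hsp43]
  have hkey : ((((1)*A1*h^1 + (-9/2)*A4*h^4 + (1421/48)*A5*h^5)^2 + 13/3*((1)*A2*h^2 + (-21/2)*A4*h^4 + (60)*A5*h^5)^2 + 1/2*(((1)*A1*h^1 + (-9/2)*A4*h^4 + (1421/48)*A5*h^5)*((1)*A3*h^3 + (-6)*A4*h^4 + (155/6)*A5*h^5)) + 3129/80*((1)*A3*h^3 + (-6)*A4*h^4 + (155/6)*A5*h^5)^2) - (((1)*A1*h^1 + (5/2)*A4*h^4 + (-259/48)*A5*h^5)^2 + 13/3*((1)*A2*h^2 + (3/2)*A4*h^4)^2 + 1/2*(((1)*A1*h^1 + (5/2)*A4*h^4 + (-259/48)*A5*h^5)*((1)*A3*h^3 + (-2)*A4*h^4 + (35/6)*A5*h^5))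 + 3129/80*((1)*A3*h^3 + (-2)*A4*h^4 + (35/6)*A5*h^5)^2) - (((1)*A1*h^1 + (-5/2)*A4*h^4 + (-259/48)*A5*h^5)^2 + 13/3*((1)*A2*h^2 + (3/2)*A4*h^4)^2 + 1/2*(((1)*A1*h^1 + (-5/2)*A4*h^4 + (-259/48)*A5*h^5)*((1)*A3*h^3 + (2)*A4*h^4 + (35/6)*A5*h^5)) + 3129/80*((1)*A3*h^3 + (2)*A4*h^4 + (35/6)*A5*h^5)^2) + (((1)*A1*h^1 + (9/2)*A4*h^4 + (1421/48)*A5*h^5)^2 + 13/3*((1)*A2*h^2 + (-21/2)*A4*h^4 + (-60)*A5*h^5)^2 + 1/2*(((1)*A1*h^1 + (9/2)*A4*h^4 + (1421/48)*A5*h^5)*((1)*A3*h^3 + (6)*A4*h^4 + (155/6)*A5*h^5)) + 3129/80*((1)*A3*h^3 + (6)*A4*h^4 + (155/6)*A5*h^5)^2))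
      = h^6 * (160*(A1*A5) - 208*(A2*A4) + h^2*(17496/5*A4^2 + 3164*(A3*A5)) + h^4*(249700/3*A5^2)) := by ring
  have hGb : |160*(A1*A5) - 208*(A2*A4) + h^2*(17496/5*A4^2 + 3164*(A3*A5)) + h^4*(249700/3*A5^2)| ≤ CG := by
    have hh2 : h^2 ≤ 1 := by nlinarith only [hh.le, hh4]
    have hh4' : h^4 ≤ 1 := by nlinarith only [hh2, hh.le, sq_nonneg h]
    rw [hCGd]
    have s1 : |160*(A1*A5) - 208*(A2*A4)| ≤ 160*|A1*A5| + 208*|A2*A4| := by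
      calc |160*(A1*A5) - 208*(A2*A4)| ≤ |160*(A1*A5)| + |208*(A2*A4)| := abs_sub_le' _ _
        _ = 160*|A1*A5| + 208*|A2*A4| := by rw [abs_mul 160 (A1*A5), abs_mul 208 (A2*A4)]; norm_num
    have s2 : |h^2*(17496/5*A4^2 + 3164*(A3*A5))| ≤ 17496/5*A4^2 + 3164*|A3*A5| := by
      rw [abs_mul]
      have e2 : |17496/5*A4^2 + 3164*(A3*A5)| ≤ 17496/5*A4^2 + 3164*|A3*A5| := by
        calc |17496/5*A4^2 + 3164*(A3*A5)| ≤ |17496/5*A4^2| + |3164*(A3*A5)| := abs_add_le _ _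
          _ = 17496/5*A4^2 + 3164*|A3*A5| := by rw [abs_of_nonneg (by positivity : (0:ℝ) ≤ 17496/5*A4^2), abs_mul 3164 (A3*A5)]; norm_num
      calc |h^2| * |17496/5*A4^2 + 3164*(A3*A5)| ≤ 1 * (17496/5*A4^2 + 3164*|A3*A5|) := by
            apply mul_le_mul _ e2 (abs_nonneg _) (by norm_num)
            rw [abs_of_nonneg (by positivity : (0:ℝ) ≤ h^2)]; exact hh2
        _ = 17496/5*A4^2 + 3164*|A3*A5| := by ring
    have s3 : |h^4*(249700/3*A5^2)| ≤ 249700/3*A5^2 := by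
      rw [abs_mul, abs_of_nonneg (by positivity : (0:ℝ) ≤ h^4), abs_of_nonneg (by positivity : (0:ℝ) ≤ 249700/3*A5^2)]
      nlinarith only [sq_nonneg A5, hh4']
    calc |160*(A1*A5) - 208*(A2*A4) + h^2*(17496/5*A4^2 + 3164*(A3*A5)) + h^4*(249700/3*A5^2)|
        ≤ |160*(A1*A5) - 208*(A2*A4) + h^2*(17496/5*A4^2 + 3164*(A3*A5))| + |h^4*(249700/3*A5^2)| := abs_add_le _ _
      _ ≤ (|160*(A1*A5) - 208*(A2*A4)| + |h^2*(17496/5*A4^2 + 3164*(A3*A5))|) + |h^4*(249700/3*A5^2)| := by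
          gcongr; exact abs_add_le _ _
      _ ≤ (160*|A1*A5| + 208*|A2*A4| + (17496/5*A4^2 + 3164*|A3*A5|)) + 249700/3*A5^2 := by
          have h9 := add_le_add (add_le_add s1 s2) s3; linarith only [h9]
      _ = 160*|A1*A5| + 208*|A2*A4| + 17496/5*A4^2 + 3164*|A3*A5| + 249700/3*A5^2 := by ring
  have hD : |(((1)*A1*h^1 + (-9/2)*A4*h^4 + (1421/48)*A5*h^5)^2 + 13/3*((1)*A2*h^2 + (-21/2)*A4*h^4 + (60)*A5*h^5)^2 + 1/2*(((1)*A1*h^1 + (-9/2)*A4*h^4 + (1421/48)*A5*h^5)*((1)*A3*h^3 + (-6)*A4*h^4 + (155/6)*A5*h^5)) + 3129/80*((1)*A3*h^3 + (-6)*A4*h^4 + (155/6)*A5*h^5)^2) - (((1)*A1*h^1 + (5/2)*A4*h^4 + (-259/48)*A5*h^5)^2 + 13/3*((1)*A2*h^2 + (3/2)*A4*h^4)^2 + 1/2*(((1)*A1*h^1 + (5/2)*A4*h^4 + (-259/48)*A5*h^5)*((1)*A3*h^3 + (-2)*A4*h^4 + (35/6)*A5*h^5)) + 3129/80*((1)*A3*h^3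 + (-2)*A4*h^4 + (35/6)*A5*h^5)^2) - (((1)*A1*h^1 + (-5/2)*A4*h^4 + (-259/48)*A5*h^5)^2 + 13/3*((1)*A2*h^2 + (3/2)*A4*h^4)^2 + 1/2*(((1)*A1*h^1 + (-5/2)*A4*h^4 + (-259/48)*A5*h^5)*((1)*A3*h^3 + (2)*A4*h^4 + (35/6)*A5*h^5)) + 3129/80*((1)*A3*h^3 + (2)*A4*h^4 + (35/6)*A5*h^5)^2) + (((1)*A1*h^1 + (9/2)*A4*h^4 + (1421/48)*A5*h^5)^2 + 13/3*((1)*A2*h^2 + (-21/2)*A4*h^4 + (-60)*A5*h^5)^2 + 1/2*(((1)*A1*h^1 + (9/2)*A4*h^4 + (1421/48)*A5*h^5)*((1)*A3*h^3 + (6)*A4*h^4 + (155/6)*A5*h^5)) + 3129/80*((1)*A3*h^3 + (6)*A4*h^4 + (155/6)*A5*h^5)^2)| ≤ h^6*CG := by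
    rw [hkey, abs_mul, abs_of_nonneg (by positivity : (0:ℝ) ≤ h^6)]
    exact mul_le_mul_of_nonneg_left hGb (by positivity)
  have hRle : 7*(M*(7/2)^6*h^6) ≤ 7*M := by linarith only [hsmall]
  have hR70 : (0:ℝ) ≤ 7*(M*(7/2)^6*h^6) := by linarith only [hR0]
  have hQd1 : |((((1)*A1*h^1 + (-9/2)*A4*h^4 + (1421/48)*A5*h^5) + ρ11)^2 + 13/3*(((1)*A2*h^2 + (-21/2)*A4*h^4 + (60)*A5*h^5) + ρ12)^2 + 1/2*((((1)*A1*h^1 + (-9/2)*A4*h^4 + (1421/48)*A5*h^5) + ρ11)*(((1)*A3*h^3 + (-6)*A4*h^4 + (155/6)*A5*h^5) + ρ13)) + 3129/80*(((1)*A3*h^3 + (-6)*A4*h^4 + (155/6)*A5*h^5) + ρ13)^2) - (((1)*A1*h^1 + (-9/2)*A4*h^4 + (1421/48)*A5*h^5)^2 + 13/3*((1)*A2*h^2 + (-21/2)*A4*h^4 + (60)*A5*h^5)^2 + 1/2*(((1)*A1*h^1 + (-9/2)*A4*h^4 + (1421/48)*A5*h^5)*((1)*A3*h^3 + (-6)*A4*h^4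 + (155/6)*A5*h^5)) + 3129/80*((1)*A3*h^3 + (-6)*A4*h^4 + (155/6)*A5*h^5)^2)| ≤ 46*((2*Bb+7*M)*(7*(M*(7/2)^6*h^6))) :=
    Qdiff_bound hbeta11 hbeta12 hbeta13 hrho11 hrho12 hrho13 hR70 hBb0 hRle
  have hQd2 : |((((1)*A1*h^1 + (5/2)*A4*h^4 + (-259/48)*A5*h^5) + ρ21)^2 + 13/3*(((1)*A2*h^2 + (3/2)*A4*h^4) + ρ22)^2 + 1/2*((((1)*A1*h^1 + (5/2)*A4*h^4 + (-259/48)*A5*h^5) + ρ21)*(((1)*A3*h^3 + (-2)*A4*h^4 + (35/6)*A5*h^5) + ρ23)) + 3129/80*(((1)*A3*h^3 + (-2)*A4*h^4 + (35/6)*A5*h^5) + ρ23)^2) - (((1)*A1*h^1 + (5/2)*A4*h^4 + (-259/48)*A5*h^5)^2 + 13/3*((1)*A2*h^2 + (3/2)*A4*h^4)^2 + 1/2*(((1)*A1*h^1 + (5/2)*A4*h^4 + (-259/48)*A5*h^5)*((1)*A3*h^3 + (-2)*A4*h^4 + (35/6)*A5*h^5)) + 3129/80*((1)*A3*h^3 +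 (-2)*A4*h^4 + (35/6)*A5*h^5)^2)| ≤ 46*((2*Bb+7*M)*(7*(M*(7/2)^6*h^6))) :=
    Qdiff_bound hbeta21 hbeta22 hbeta23 hrho21 hrho22 hrho23 hR70 hBb0 hRle
  have hQd3 : |((((1)*A1*h^1 + (-5/2)*A4*h^4 + (-259/48)*A5*h^5) + ρ31)^2 + 13/3*(((1)*A2*h^2 + (3/2)*A4*h^4) + ρ32)^2 + 1/2*((((1)*A1*h^1 + (-5/2)*A4*h^4 + (-259/48)*A5*h^5) + ρ31)*(((1)*A3*h^3 + (2)*A4*h^4 + (35/6)*A5*h^5) + ρ33)) + 3129/80*(((1)*A3*h^3 + (2)*A4*h^4 + (35/6)*A5*h^5) + ρ33)^2) - (((1)*A1*h^1 + (-5/2)*A4*h^4 + (-259/48)*A5*h^5)^2 + 13/3*((1)*A2*h^2 + (3/2)*A4*h^4)^2 + 1/2*(((1)*A1*h^1 + (-5/2)*A4*h^4 + (-259/48)*A5*h^5)*((1)*A3*h^3 + (2)*A4*h^4 + (35/6)*A5*h^5)) + 3129/80*((1)*A3*h^3 + (2)*A4*h^4 + (35/6)*A5*h^5)^2)| ≤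 46*((2*Bb+7*M)*(7*(M*(7/2)^6*h^6))) :=
    Qdiff_bound hbeta31 hbeta32 hbeta33 hrho31 hrho32 hrho33 hR70 hBb0 hRle
  have hQd4 : |((((1)*A1*h^1 + (9/2)*A4*h^4 + (1421/48)*A5*h^5) + ρ41)^2 + 13/3*(((1)*A2*h^2 + (-21/2)*A4*h^4 + (-60)*A5*h^5) + ρ42)^2 + 1/2*((((1)*A1*h^1 + (9/2)*A4*h^4 + (1421/48)*A5*h^5) + ρ41)*(((1)*A3*h^3 + (6)*A4*h^4 + (155/6)*A5*h^5) + ρ43)) + 3129/80*(((1)*A3*h^3 + (6)*A4*h^4 + (155/6)*A5*h^5) + ρ43)^2) - (((1)*A1*h^1 + (9/2)*A4*h^4 + (1421/48)*A5*h^5)^2 + 13/3*((1)*A2*h^2 + (-21/2)*A4*h^4 + (-60)*A5*h^5)^2 + 1/2*(((1)*A1*h^1 + (9/2)*A4*h^4 + (1421/48)*A5*h^5)*((1)*A3*h^3 + (6)*A4*h^4 + (155/6)*A5*h^5)) + 3129/80*((1)*A3*h^3 + (6)*A4*h^4 + (155/6)*A5*h^5)^2)| ≤ 46*((2*Bb+7*M)*(7*(M*(7/2)^6*h^6)))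 :=
    Qdiff_bound hbeta41 hbeta42 hbeta43 hrho41 hrho42 hrho43 hR70 hBb0 hRle
  calc |((((1)*A1*h^1 + (-9/2)*A4*h^4 + (1421/48)*A5*h^5) + ρ11)^2 + 13/3*(((1)*A2*h^2 + (-21/2)*A4*h^4 + (60)*A5*h^5) + ρ12)^2 + 1/2*((((1)*A1*h^1 + (-9/2)*A4*h^4 + (1421/48)*A5*h^5) + ρ11)*(((1)*A3*h^3 + (-6)*A4*h^4 + (155/6)*A5*h^5) + ρ13)) + 3129/80*(((1)*A3*h^3 + (-6)*A4*h^4 + (155/6)*A5*h^5) + ρ13)^2) - ((((1)*A1*h^1 + (5/2)*A4*h^4 + (-259/48)*A5*h^5) + ρ21)^2 + 13/3*(((1)*A2*h^2 + (3/2)*A4*h^4) + ρ22)^2 + 1/2*((((1)*A1*h^1 + (5/2)*A4*h^4 + (-259/48)*A5*h^5) + ρ21)*(((1)*A3*h^3 + (-2)*A4*h^4 + (35/6)*A5*h^5) + ρ23)) + 3129/80*(((1)*A3*h^3 + (-2)*A4*h^4 + (35/6)*A5*h^5) + ρ23)^2) - ((((1)*A1*h^1 + (-5/2)*A4*h^4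 + (-259/48)*A5*h^5) + ρ31)^2 + 13/3*(((1)*A2*h^2 + (3/2)*A4*h^4) + ρ32)^2 + 1/2*((((1)*A1*h^1 + (-5/2)*A4*h^4 + (-259/48)*A5*h^5) + ρ31)*(((1)*A3*h^3 + (2)*A4*h^4 + (35/6)*A5*h^5) + ρ33)) + 3129/80*(((1)*A3*h^3 + (2)*A4*h^4 + (35/6)*A5*h^5) + ρ33)^2) + ((((1)*A1*h^1 + (9/2)*A4*h^4 + (1421/48)*A5*h^5) + ρ41)^2 + 13/3*(((1)*A2*h^2 + (-21/2)*A4*h^4 + (-60)*A5*h^5) + ρ42)^2 + 1/2*((((1)*A1*h^1 + (9/2)*A4*h^4 + (1421/48)*A5*h^5) + ρ41)*(((1)*A3*h^3 + (6)*A4*h^4 + (155/6)*A5*h^5) + ρ43)) + 3129/80*(((1)*A3*h^3 + (6)*A4*h^4 + (155/6)*A5*h^5) + ρ43)^2)|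
      = |((((1)*A1*h^1 + (-9/2)*A4*h^4 + (1421/48)*A5*h^5)^2 + 13/3*((1)*A2*h^2 + (-21/2)*A4*h^4 + (60)*A5*h^5)^2 + 1/2*(((1)*A1*h^1 + (-9/2)*A4*h^4 + (1421/48)*A5*h^5)*((1)*A3*h^3 + (-6)*A4*h^4 + (155/6)*A5*h^5)) + 3129/80*((1)*A3*h^3 + (-6)*A4*h^4 + (155/6)*A5*h^5)^2) - (((1)*A1*h^1 + (5/2)*A4*h^4 + (-259/48)*A5*h^5)^2 + 13/3*((1)*A2*h^2 + (3/2)*A4*h^4)^2 + 1/2*(((1)*A1*h^1 + (5/2)*A4*h^4 + (-259/48)*A5*h^5)*((1)*A3*h^3 + (-2)*A4*h^4 + (35/6)*A5*h^5)) + 3129/80*((1)*A3*h^3 + (-2)*A4*h^4 + (35/6)*A5*h^5)^2) - (((1)*A1*h^1 + (-5/2)*A4*h^4 + (-259/48)*A5*h^5)^2 + 13/3*((1)*A2*h^2 + (3/2)*A4*h^4)^2 + 1/2*(((1)*A1*h^1 + (-5/2)*A4*h^4 + (-259/48)*A5*h^5)*((1)*A3*h^3 + (2)*A4*h^4 + (35/6)*A5*h^5))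 + 3129/80*((1)*A3*h^3 + (2)*A4*h^4 + (35/6)*A5*h^5)^2) + (((1)*A1*h^1 + (9/2)*A4*h^4 + (1421/48)*A5*h^5)^2 + 13/3*((1)*A2*h^2 + (-21/2)*A4*h^4 + (-60)*A5*h^5)^2 + 1/2*(((1)*A1*h^1 + (9/2)*A4*h^4 + (1421/48)*A5*h^5)*((1)*A3*h^3 + (6)*A4*h^4 + (155/6)*A5*h^5)) + 3129/80*((1)*A3*h^3 + (6)*A4*h^4 + (155/6)*A5*h^5)^2))
        + (((((((1)*A1*h^1 + (-9/2)*A4*h^4 + (1421/48)*A5*h^5) + ρ11)^2 + 13/3*(((1)*A2*h^2 + (-21/2)*A4*h^4 + (60)*A5*h^5) + ρ12)^2 + 1/2*((((1)*A1*h^1 + (-9/2)*A4*h^4 + (1421/48)*A5*h^5) + ρ11)*(((1)*A3*h^3 + (-6)*A4*h^4 + (155/6)*A5*h^5) + ρ13)) + 3129/80*(((1)*A3*h^3 + (-6)*A4*h^4 + (155/6)*A5*h^5) + ρ13)^2) - (((1)*A1*h^1 + (-9/2)*A4*h^4 + (1421/48)*A5*h^5)^2 + 13/3*((1)*A2*h^2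 + (-21/2)*A4*h^4 + (60)*A5*h^5)^2 + 1/2*(((1)*A1*h^1 + (-9/2)*A4*h^4 + (1421/48)*A5*h^5)*((1)*A3*h^3 + (-6)*A4*h^4 + (155/6)*A5*h^5)) + 3129/80*((1)*A3*h^3 + (-6)*A4*h^4 + (155/6)*A5*h^5)^2))) - ((((((1)*A1*h^1 + (5/2)*A4*h^4 + (-259/48)*A5*h^5) + ρ21)^2 + 13/3*(((1)*A2*h^2 + (3/2)*A4*h^4) + ρ22)^2 + 1/2*((((1)*A1*h^1 + (5/2)*A4*h^4 + (-259/48)*A5*h^5) + ρ21)*(((1)*A3*h^3 + (-2)*A4*h^4 + (35/6)*A5*h^5) + ρ23)) + 3129/80*(((1)*A3*h^3 + (-2)*A4*h^4 + (35/6)*A5*h^5) + ρ23)^2) - (((1)*A1*h^1 + (5/2)*A4*h^4 + (-259/48)*A5*h^5)^2 + 13/3*((1)*A2*h^2 + (3/2)*A4*h^4)^2 + 1/2*(((1)*A1*h^1 + (5/2)*A4*h^4 + (-259/48)*A5*h^5)*((1)*A3*h^3 + (-2)*A4*h^4 + (35/6)*A5*h^5)) + 3129/80*((1)*A3*h^3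 + (-2)*A4*h^4 + (35/6)*A5*h^5)^2))) - ((((((1)*A1*h^1 + (-5/2)*A4*h^4 + (-259/48)*A5*h^5) + ρ31)^2 + 13/3*(((1)*A2*h^2 + (3/2)*A4*h^4) + ρ32)^2 + 1/2*((((1)*A1*h^1 + (-5/2)*A4*h^4 + (-259/48)*A5*h^5) + ρ31)*(((1)*A3*h^3 + (2)*A4*h^4 + (35/6)*A5*h^5) + ρ33)) + 3129/80*(((1)*A3*h^3 + (2)*A4*h^4 + (35/6)*A5*h^5) + ρ33)^2) - (((1)*A1*h^1 + (-5/2)*A4*h^4 + (-259/48)*A5*h^5)^2 + 13/3*((1)*A2*h^2 + (3/2)*A4*h^4)^2 + 1/2*(((1)*A1*h^1 + (-5/2)*A4*h^4 + (-259/48)*A5*h^5)*((1)*A3*h^3 + (2)*A4*h^4 + (35/6)*A5*h^5)) + 3129/80*((1)*A3*h^3 + (2)*A4*h^4 + (35/6)*A5*h^5)^2))) + ((((((1)*A1*h^1 + (9/2)*A4*h^4 + (1421/48)*A5*h^5) + ρ41)^2 + 13/3*(((1)*A2*h^2 + (-21/2)*A4*h^4 + (-60)*A5*h^5) + ρ42)^2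 + 1/2*((((1)*A1*h^1 + (9/2)*A4*h^4 + (1421/48)*A5*h^5) + ρ41)*(((1)*A3*h^3 + (6)*A4*h^4 + (155/6)*A5*h^5) + ρ43)) + 3129/80*(((1)*A3*h^3 + (6)*A4*h^4 + (155/6)*A5*h^5) + ρ43)^2) - (((1)*A1*h^1 + (9/2)*A4*h^4 + (1421/48)*A5*h^5)^2 + 13/3*((1)*A2*h^2 + (-21/2)*A4*h^4 + (-60)*A5*h^5)^2 + 1/2*(((1)*A1*h^1 + (9/2)*A4*h^4 + (1421/48)*A5*h^5)*((1)*A3*h^3 + (6)*A4*h^4 + (155/6)*A5*h^5)) + 3129/80*((1)*A3*h^3 + (6)*A4*h^4 + (155/6)*A5*h^5)^2))))| := by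
        congr 1; ring
    _ ≤ |(((1)*A1*h^1 + (-9/2)*A4*h^4 + (1421/48)*A5*h^5)^2 + 13/3*((1)*A2*h^2 + (-21/2)*A4*h^4 + (60)*A5*h^5)^2 + 1/2*(((1)*A1*h^1 + (-9/2)*A4*h^4 + (1421/48)*A5*h^5)*((1)*A3*h^3 + (-6)*A4*h^4 + (155/6)*A5*h^5)) + 3129/80*((1)*A3*h^3 + (-6)*A4*h^4 + (155/6)*A5*h^5)^2) - (((1)*A1*h^1 + (5/2)*A4*h^4 + (-259/48)*A5*h^5)^2 + 13/3*((1)*A2*h^2 + (3/2)*A4*h^4)^2 + 1/2*(((1)*A1*h^1 + (5/2)*A4*h^4 + (-259/48)*A5*h^5)*((1)*A3*h^3 + (-2)*A4*h^4 + (35/6)*A5*h^5)) + 3129/80*((1)*A3*h^3 + (-2)*A4*h^4 + (35/6)*A5*h^5)^2) - (((1)*A1*h^1 + (-5/2)*A4*h^4 + (-259/48)*A5*h^5)^2 + 13/3*((1)*A2*h^2 + (3/2)*A4*h^4)^2 + 1/2*(((1)*A1*h^1 + (-5/2)*A4*h^4 + (-259/48)*A5*h^5)*((1)*A3*h^3 +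 (2)*A4*h^4 + (35/6)*A5*h^5)) + 3129/80*((1)*A3*h^3 + (2)*A4*h^4 + (35/6)*A5*h^5)^2) + (((1)*A1*h^1 + (9/2)*A4*h^4 + (1421/48)*A5*h^5)^2 + 13/3*((1)*A2*h^2 + (-21/2)*A4*h^4 + (-60)*A5*h^5)^2 + 1/2*(((1)*A1*h^1 + (9/2)*A4*h^4 + (1421/48)*A5*h^5)*((1)*A3*h^3 + (6)*A4*h^4 + (155/6)*A5*h^5)) + 3129/80*((1)*A3*h^3 + (6)*A4*h^4 + (155/6)*A5*h^5)^2)|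
        + (|((((1)*A1*h^1 + (-9/2)*A4*h^4 + (1421/48)*A5*h^5) + ρ11)^2 + 13/3*(((1)*A2*h^2 + (-21/2)*A4*h^4 + (60)*A5*h^5) + ρ12)^2 + 1/2*((((1)*A1*h^1 + (-9/2)*A4*h^4 + (1421/48)*A5*h^5) + ρ11)*(((1)*A3*h^3 + (-6)*A4*h^4 + (155/6)*A5*h^5) + ρ13)) + 3129/80*(((1)*A3*h^3 + (-6)*A4*h^4 + (155/6)*A5*h^5) + ρ13)^2) - (((1)*A1*h^1 + (-9/2)*A4*h^4 + (1421/48)*A5*h^5)^2 + 13/3*((1)*A2*h^2 + (-21/2)*A4*h^4 + (60)*A5*h^5)^2 + 1/2*(((1)*A1*h^1 + (-9/2)*A4*h^4 + (1421/48)*A5*h^5)*((1)*A3*h^3 + (-6)*A4*h^4 + (155/6)*A5*h^5)) + 3129/80*((1)*A3*h^3 + (-6)*A4*h^4 + (155/6)*A5*h^5)^2)| + |((((1)*A1*h^1 + (5/2)*A4*h^4 + (-259/48)*A5*h^5) + ρ21)^2 + 13/3*(((1)*A2*h^2 + (3/2)*A4*h^4) + ρ22)^2 + 1/2*((((1)*A1*h^1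 + (5/2)*A4*h^4 + (-259/48)*A5*h^5) + ρ21)*(((1)*A3*h^3 + (-2)*A4*h^4 + (35/6)*A5*h^5) + ρ23)) + 3129/80*(((1)*A3*h^3 + (-2)*A4*h^4 + (35/6)*A5*h^5) + ρ23)^2) - (((1)*A1*h^1 + (5/2)*A4*h^4 + (-259/48)*A5*h^5)^2 + 13/3*((1)*A2*h^2 + (3/2)*A4*h^4)^2 + 1/2*(((1)*A1*h^1 + (5/2)*A4*h^4 + (-259/48)*A5*h^5)*((1)*A3*h^3 + (-2)*A4*h^4 + (35/6)*A5*h^5)) + 3129/80*((1)*A3*h^3 + (-2)*A4*h^4 + (35/6)*A5*h^5)^2)| + |((((1)*A1*h^1 + (-5/2)*A4*h^4 + (-259/48)*A5*h^5) + ρ31)^2 + 13/3*(((1)*A2*h^2 + (3/2)*A4*h^4) + ρ32)^2 + 1/2*((((1)*A1*h^1 + (-5/2)*A4*h^4 + (-259/48)*A5*h^5) + ρ31)*(((1)*A3*h^3 + (2)*A4*h^4 + (35/6)*A5*h^5) + ρ33)) + 3129/80*(((1)*A3*h^3 + (2)*A4*h^4 + (35/6)*A5*h^5) + ρ33)^2)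 - (((1)*A1*h^1 + (-5/2)*A4*h^4 + (-259/48)*A5*h^5)^2 + 13/3*((1)*A2*h^2 + (3/2)*A4*h^4)^2 + 1/2*(((1)*A1*h^1 + (-5/2)*A4*h^4 + (-259/48)*A5*h^5)*((1)*A3*h^3 + (2)*A4*h^4 + (35/6)*A5*h^5)) + 3129/80*((1)*A3*h^3 + (2)*A4*h^4 + (35/6)*A5*h^5)^2)| + |((((1)*A1*h^1 + (9/2)*A4*h^4 + (1421/48)*A5*h^5) + ρ41)^2 + 13/3*(((1)*A2*h^2 + (-21/2)*A4*h^4 + (-60)*A5*h^5) + ρ42)^2 + 1/2*((((1)*A1*h^1 + (9/2)*A4*h^4 + (1421/48)*A5*h^5) + ρ41)*(((1)*A3*h^3 + (6)*A4*h^4 + (155/6)*A5*h^5) + ρ43)) + 3129/80*(((1)*A3*h^3 + (6)*A4*h^4 + (155/6)*A5*h^5) + ρ43)^2) - (((1)*A1*h^1 + (9/2)*A4*h^4 + (1421/48)*A5*h^5)^2 + 13/3*((1)*A2*h^2 + (-21/2)*A4*h^4 + (-60)*A5*h^5)^2 + 1/2*(((1)*A1*h^1 + (9/2)*A4*h^4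 + (1421/48)*A5*h^5)*((1)*A3*h^3 + (6)*A4*h^4 + (155/6)*A5*h^5)) + 3129/80*((1)*A3*h^3 + (6)*A4*h^4 + (155/6)*A5*h^5)^2)|) := abs_add5' _ _ _ _ _
    _ ≤ h^6*CG + (46*((2*Bb+7*M)*(7*(M*(7/2)^6*h^6))) + 46*((2*Bb+7*M)*(7*(M*(7/2)^6*h^6))) + 46*((2*Bb+7*M)*(7*(M*(7/2)^6*h^6))) + 46*((2*Bb+7*M)*(7*(M*(7/2)^6*h^6)))) := by
        exact add_le_add hD (add_le_add (add_le_add (add_le_add hQd1 hQd2) hQd3) hQd4)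
    _ ≤ (CG + K + 1)*h^6 := by
        rw [hKd]
        linarith only [mul_nonneg (mul_nonneg (le_of_lt hh) (le_of_lt hh)) (pow_nonneg hh.le 6), pow_nonneg hh.le 6]
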